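/- arXiv:2112.08463 — 8 statements merged into one kernel-verified Lean document; each statement's English description precedes it below -/
import Mathlib

section
/- Let M = (M_k) be a positive sequence with M_0 = 1 and M_k^{1/k} → ∞, and define the associated function ω_M(t) := sup_{k ∈ ℕ} log(t^k / M_k) for t > 0, ω_M(0) := 0. Define the log-convex minorant underline-M by underline-M_k := sup_{t ≥ 0} t^k / exp(ω_M(t)). Then underline-M ≤ M, and if L is any log-convex positive sequence with L_0 = 1 and L ≤ M, then L ≤ underline-M. -/
open MeasureTheory Set Filter

private lemma bdd_of_tail (f : ℕ → ℝ) (N : ℕ) (h : ∀ j, N ≤ j → f j ≤ 0) :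
    BddAbove (Set.range f) := by
  refine ⟨max 0 ((Finset.range (N + 1)).sup' (by simp) f), ?_⟩
  rintro x ⟨j, rfl⟩
  rcases le_or_gt N j with hj | hj
  · exact le_max_of_le_left (h j hj)
  · exact le_max_of_le_right (Finset.le_sup' f (Finset.mem_range.2 (by omega)))

theorem stmt_3 (M : ℕ → ℝ) (hpos : ∀ k, 0 < M k) (h0 : M 0 = 1)
    (hgrow : Tendsto (fun k : ℕ => (M k) ^ (1 / (k : ℝ))) atTop atTop)
    (ωM : ℝ → ℝ) (hω0 : ωM 0 = 0)
    (hω : ∀ t, 0 < t → ωM t = ⨆ k : ℕ, Real.log (t ^ k / M k))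
    (uM : ℕ → ℝ)
    (hu : ∀ k, uM k = ⨆ t : Ici (0 : ℝ), (t : ℝ) ^ k / Real.exp (ωM t)) :
    (∀ k, uM k ≤ M k) ∧
      ∀ L : ℕ → ℝ, (∀ k, 0 < L k) → L 0 = 1 →
        (∀ k, 1 ≤ k → L k ^ 2 ≤ L (k - 1) * L (k + 1)) →
        (∀ k, L k ≤ M k) → ∀ k, L k ≤ uM k := by
  haveI : Nonempty (Ici (0:ℝ)) := ⟨⟨0, Set.self_mem_Ici⟩⟩
  -- Fact A: for t > 0, the family j ↦ log (t^j / M j) is bounded above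
  have bddA : ∀ t : ℝ, 0 < t → BddAbove (Set.range fun j : ℕ => Real.log (t ^ j / M j)) := by
    intro t ht
    obtain ⟨N, hN⟩ := Filter.eventually_atTop.mp (hgrow.eventually_ge_atTop t)
    refine bdd_of_tail _ (max N 1) ?_
    intro j hj
    have hj1 : 1 ≤ j := le_trans (le_max_right N 1) hj
    have hjN : N ≤ j := le_trans (le_max_left N 1) hj
    have hMj : t ^ j ≤ M j := by
      have h1 : t ≤ M j ^ (1 / (j : ℝ)) := hN j hjN
      have h2 : t ^ j ≤ (M j ^ (1 / (j : ℝ))) ^ j :=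
        pow_le_pow_left₀ ht.le h1 j
      have h3 : (M j ^ (1 / (j : ℝ))) ^ j = M j := by
        rw [← Real.rpow_natCast (M j ^ (1 / (j : ℝ))) j, ← Real.rpow_mul (hpos j).le]
        rw [one_div_mul_cancel (Nat.cast_ne_zero.2 (by omega)), Real.rpow_one]
      rw [h3] at h2; exact h2
    have htj : (0:ℝ) < t ^ j := pow_pos ht j
    exact Real.log_nonpos (div_nonneg htj.le (hpos j).le) ((div_le_one (lt_of_lt_of_le htj hMj)).2 hMj)
  -- Part 1 bound for each t ≥ 0
  have bound1 : ∀ k, ∀ t : ℝ, 0 ≤ t → t ^ k / Real.exp (ωM t) ≤ M k := by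
    intro k t ht
    rcases ht.eq_or_lt with h | h
    · subst h
      rw [hω0, Real.exp_zero, div_one]
      cases k with
      | zero => simp [h0]
      | succ n => simp [(hpos _).le]
    · have hle : Real.log (t ^ k / M k) ≤ ωM t := by
        rw [hω t h]
        exact le_ciSup (bddA t h) k
      have hpos' : (0:ℝ) < t ^ k / M k := div_pos (pow_pos h k) (hpos k)
      have : t ^ k / M k ≤ Real.exp (ωM t) := by
        calc t ^ k / M k = Real.exp (Real.log (t ^ k / M k)) := (Real.exp_log hpos').symm
        _ ≤ Real.exp (ωM t) := Real.exp_le_exp.2 hle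
      rw [div_le_iff₀ (Real.exp_pos _)]
      rw [div_le_iff₀ (hpos k)] at this
      nlinarith [Real.exp_pos (ωM t), (hpos k)]
  constructor
  · intro k
    rw [hu k]
    exact ciSup_le fun ⟨t, ht⟩ => bound1 k t ht
  · intro L hL hL0 hlc hLM k
    set t := L (k + 1) / L k with htdef
    have htpos : 0 < t := div_pos (hL _) (hL _)
    -- q monotone
    have hq : Monotone fun j => L (j + 1) / L j := by
      apply monotone_nat_of_le_succ
      intro j
      have := hlc (j + 1) (by omega)
      simp only [Nat.add_sub_cancel] at this
      rw [div_le_div_iff₀ (hL _) (hL _)]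
      nlinarith [hL j, hL (j+1), hL (j+2)]
    -- g j := t^j / L j is maximized at j = k
    have key : ∀ j, t ^ j / L j ≤ t ^ k / L k := by
      have step_up : ∀ j, j ≤ k → t ^ j / L j ≤ t ^ (j + 1) / L (j + 1) := by
        intro j hj
        rw [div_le_div_iff₀ (hL _) (hL _), pow_succ]
        have hqj : L (j + 1) / L j ≤ t := hq hj
        rw [div_le_iff₀ (hL j)] at hqj
        have := pow_pos htpos j
        nlinarith
      have step_dn : ∀ j, k ≤ j → t ^ (j + 1) / L (j + 1) ≤ t ^ j / L j := by
        intro j hj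
        rw [div_le_div_iff₀ (hL _) (hL _), pow_succ]
        have hqj : t ≤ L (j + 1) / L j := hq hj
        rw [le_div_iff₀ (hL j)] at hqj
        have := pow_pos htpos j
        nlinarith
      have up : ∀ i, i ≤ k → t ^ (k - i) / L (k - i) ≤ t ^ k / L k := by
        intro i hi
        induction i with
        | zero => simp
        | succ n ih =>
          have hn : n ≤ k := by omega
          have h1 : k - (n + 1) + 1 = k - n := by omega
          calc t ^ (k - (n+1)) / L (k - (n+1))
              ≤ t ^ (k - (n+1) + 1) / L (k - (n+1) + 1) := step_up _ (by omega)
            _ = t ^ (k - n) / L (k - n) := by rw [h1]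
            _ ≤ t ^ k / L k := ih hn
      have dn : ∀ j, k ≤ j → t ^ j / L j ≤ t ^ k / L k := by
        intro j hj
        induction j, hj using Nat.le_induction with
        | base => exact le_refl _
        | succ n hn ih => exact le_trans (step_dn n hn) ih
      intro j
      rcases le_or_gt j k with hj | hj
      · have : k - (k - j) = j := by omega
        simpa [this] using up (k - j) (by omega)
      · exact dn j hj.le
    -- conclude
    have hω_le : ωM t ≤ Real.log (t ^ k / L k) := by
      rw [hω t htpos]
      refine ciSup_le fun j => ?_
      have h1 : t ^ j / M j ≤ t ^ j / L j :=
        div_le_div_of_nonneg_left (pow_pos htpos j).le (hL j) (hLM j)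
      exact Real.log_le_log (div_pos (pow_pos htpos j) (hpos j)) (le_trans h1 (key j))
    have hgk : (0:ℝ) < t ^ k / L k := div_pos (pow_pos htpos k) (hL k)
    have hexp : Real.exp (ωM t) ≤ t ^ k / L k := by
      calc Real.exp (ωM t) ≤ Real.exp (Real.log (t ^ k / L k)) := Real.exp_le_exp.2 hω_le
      _ = t ^ k / L k := Real.exp_log hgk
    have hfin : L k ≤ t ^ k / Real.exp (ωM t) := by
      rw [le_div_iff₀ (Real.exp_pos _)]
      calc L k * Real.exp (ωM t) ≤ L k * (t ^ k / L k) :=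
            mul_le_mul_of_nonneg_left hexp (hL k).le
      _ = t ^ k := by rw [mul_comm, div_mul_eq_mul_div, mul_div_assoc, div_self (hL k).ne', mul_one]
    rw [hu k]
    refine le_ciSup_of_le ?_ (⟨t, htpos.le⟩ : Ici (0:ℝ)) hfin
    exact ⟨M k, by rintro x ⟨⟨s, hs⟩, rfl⟩; exact bound1 k s hs⟩
end

section
/- Let M be a weight sequence with quotients μ_k = M_k/M_{k-1}. Then M has moderate growth (∃ C ≥ 1 such that M_{j+k} ≤ C^{j+k} M_j M_k for all j,k) if and only if the associated function ω_M satisfies: ∃ H ≥ 1 such that 2ω_M(t) ≤ ω_M(Ht) + H for all t ≥ 0. -/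
open MeasureTheory Set Filter

theorem stmt_5 (μ M : ℕ → ℝ) (hμ0 : μ 0 = 1) (hμ1 : 1 ≤ μ 1)
    (hμmono : Monotone μ) (hμtop : Tendsto μ atTop atTop)
    (hM : ∀ k, M k = ∏ i ∈ Finset.range (k + 1), μ i)
    (ωM : ℝ → ℝ) (hω0 : ωM 0 = 0)
    (hω : ∀ t, 0 < t → ωM t = ⨆ k : ℕ, Real.log (t ^ k / M k)) :
    (∃ C : ℝ, 1 ≤ C ∧ ∀ j k, M (j + k) ≤ C ^ (j + k) * M j * M k) ↔
      (∃ H : ℝ, 1 ≤ H ∧ ∀ t, 0 ≤ t → 2 * ωM t ≤ ωM (H * t) + H) := by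
  have hμpos : ∀ i, 1 ≤ μ i := fun i => hμ0 ▸ hμmono (Nat.zero_le i)
  have hM1 : ∀ k, 1 ≤ M k := by
    intro k; rw [hM]
    calc (1:ℝ) = ∏ _i ∈ Finset.range (k + 1), 1 := by simp
      _ ≤ ∏ i ∈ Finset.range (k + 1), μ i :=
          Finset.prod_le_prod (by intros; norm_num) (fun i _ => hμpos i)
  have hMpos : ∀ k, 0 < M k := fun k => lt_of_lt_of_le one_pos (hM1 k)
  have hM0 : M 0 = 1 := by rw [hM]; simp [hμ0]
  have hMsucc : ∀ k, M (k + 1) = M k * μ (k + 1) := by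
    intro k; rw [hM, hM, Finset.prod_range_succ]
  have hsplit : ∀ a b : ℕ, M (a + b) = M a * ∏ i ∈ Finset.range b, μ (a + 1 + i) := by
    intro a b
    rw [hM, hM]
    have : a + b + 1 = (a + 1) + b := by omega
    rw [this, Finset.prod_range_add]
  -- key comparison: with s = μ (n+1), s^k * M n ≤ s^n * M k for all k
  have hkey : ∀ n k : ℕ, (μ (n + 1)) ^ k * M n ≤ (μ (n + 1)) ^ n * M k := by
    intro n k
    set s := μ (n + 1) with hs_def
    have hs1 : 1 ≤ s := hμpos _
    have hs : (0 : ℝ) < s := lt_of_lt_of_le one_pos hs1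
    rcases le_total k n with hkn | hnk
    · -- M n = M k * ∏, ∏ ≤ s^(n-k)
      have hnkk : n = k + (n - k) := by omega
      have hsp := hsplit k (n - k)
      rw [← hnkk] at hsp
      have hprod : (∏ i ∈ Finset.range (n - k), μ (k + 1 + i)) ≤ s ^ (n - k) := by
        rw [show s ^ (n - k) = ∏ _i ∈ Finset.range (n - k), s from by
          rw [Finset.prod_const, Finset.card_range]]
        apply Finset.prod_le_prod
        · intro i _; exact le_trans zero_le_one (hμpos _)
        · intro i hi
          exact hμmono (by simp only [Finset.mem_range] at hi; omega)
      calc s ^ k * M n = s ^ k * (M k * ∏ i ∈ Finset.range (n - k), μ (k + 1 + i)) := by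
              rw [hsp]
        _ ≤ s ^ k * (M k * s ^ (n - k)) := by
              apply mul_le_mul_of_nonneg_left _ (by positivity)
              exact mul_le_mul_of_nonneg_left hprod (hMpos k).le
        _ = s ^ n * M k := by conv_rhs => rw [hnkk]
                              rw [pow_add]; ring
    · -- M k = M n * ∏, ∏ ≥ s^(k-n)
      have hnkk : k = n + (k - n) := by omega
      have hsp := hsplit n (k - n)
      rw [← hnkk] at hsp
      have hprod : s ^ (k - n) ≤ ∏ i ∈ Finset.range (k - n), μ (n + 1 + i) := by
        rw [show s ^ (k - n) = ∏ _i ∈ Finset.range (k - n), s from by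
          rw [Finset.prod_const, Finset.card_range]]
        apply Finset.prod_le_prod
        · intro i _; exact le_trans zero_le_one hs1
        · intro i _
          exact hμmono (by omega)
      calc s ^ k * M n = s ^ n * (M n * s ^ (k - n)) := by
              conv_lhs => rw [hnkk]
              rw [pow_add]; ring
        _ ≤ s ^ n * (M n * ∏ i ∈ Finset.range (k - n), μ (n + 1 + i)) := by
              apply mul_le_mul_of_nonneg_left _ (by positivity)
              exact mul_le_mul_of_nonneg_left hprod (hMpos n).le
        _ = s ^ n * M k := by rw [hsp]
  -- bounded above
  have hbdd : ∀ t : ℝ, 0 < t → BddAbove (Set.range fun k : ℕ => Real.log (t ^ k / M k)) := by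
    intro t ht
    obtain ⟨N, hN⟩ := (hμtop.eventually_ge_atTop t).exists_forall_of_atTop
    have hdec : ∀ m : ℕ, t ^ (N + m) / M (N + m) ≤ t ^ N / M N := by
      intro m
      induction m with
      | zero => simp
      | succ m ih =>
        have h1 : t ^ (N + (m + 1)) / M (N + (m + 1)) ≤ t ^ (N + m) / M (N + m) := by
          have hμ' : t ≤ μ (N + m + 1) := hN (N + m + 1) (by omega)
          have heq : N + (m + 1) = (N + m) + 1 := by omega
          rw [heq, hMsucc, pow_succ]
          rw [div_le_div_iff₀ (mul_pos (hMpos (N + m)) (lt_of_lt_of_le one_pos (hμpos (N + m + 1)))) (hMpos (N + m))]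
          have h0 : (0:ℝ) < t ^ (N + m) := by positivity
          nlinarith [hMpos (N + m), h0.le, mul_le_mul_of_nonneg_left hμ' h0.le]
        exact le_trans h1 ih
    refine ⟨(Finset.range (N + 1)).sup' ⟨0, Finset.mem_range.mpr (by omega)⟩
      (fun k => Real.log (t ^ k / M k)), ?_⟩
    rintro x ⟨k, rfl⟩
    rcases le_or_gt k N with hk | hk
    · exact Finset.le_sup' (fun k => Real.log (t ^ k / M k)) (Finset.mem_range.mpr (by omega))
    · have hkN : k = N + (k - N) := by omega
      have := hdec (k - N)
      rw [← hkN] at this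
      calc Real.log (t ^ k / M k) ≤ Real.log (t ^ N / M N) :=
            Real.log_le_log (div_pos (pow_pos ht k) (hMpos k)) this
        _ ≤ _ := Finset.le_sup' (fun k => Real.log (t ^ k / M k)) (Finset.mem_range.mpr (by omega))
  have hωle : ∀ t : ℝ, 0 < t → ∀ k : ℕ, Real.log (t ^ k / M k) ≤ ωM t := by
    intro t ht k
    rw [hω t ht]
    exact le_ciSup (hbdd t ht) k
  have hωeq : ∀ n : ℕ, ωM (μ (n + 1)) = Real.log ((μ (n + 1)) ^ n / M n) := by
    intro n
    have hs1 : 1 ≤ μ (n + 1) := hμpos _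
    have hs : (0 : ℝ) < μ (n + 1) := lt_of_lt_of_le one_pos hs1
    refine le_antisymm ?_ (hωle _ hs n)
    rw [hω _ hs]
    apply ciSup_le
    intro k
    apply Real.log_le_log (div_pos (pow_pos hs k) (hMpos k))
    rw [div_le_div_iff₀ (hMpos k) (hMpos n)]
    exact hkey n k
  constructor
  · rintro ⟨C, hC1, hC⟩
    refine ⟨C, hC1, fun t ht => ?_⟩
    rcases eq_or_lt_of_le ht with h0 | h0
    · rw [← h0, mul_zero, hω0]; linarith
    · have hCt : 0 < C * t := by positivity
      have hcore : ∀ j k : ℕ, Real.log (t ^ j / M j) + Real.log (t ^ k / M k) ≤ ωM (C * t) := by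
        intro j k
        have haj : (0:ℝ) < t ^ j / M j := div_pos (pow_pos h0 j) (hMpos j)
        have hak : (0:ℝ) < t ^ k / M k := div_pos (pow_pos h0 k) (hMpos k)
        rw [← Real.log_mul haj.ne' hak.ne']
        refine le_trans (Real.log_le_log (mul_pos haj hak) ?_) (hωle _ hCt (j + k))
        rw [div_mul_div_comm, mul_pow, ← pow_add]
        rw [div_le_div_iff₀ (mul_pos (hMpos j) (hMpos k)) (hMpos (j + k))]
        have htn : (0:ℝ) < t ^ (j + k) := by positivity
        calc t ^ (j + k) * M (j + k) ≤ t ^ (j + k) * (C ^ (j + k) * M j * M k) :=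
              mul_le_mul_of_nonneg_left (hC j k) htn.le
          _ = C ^ (j + k) * t ^ (j + k) * (M j * M k) := by ring
      have h1 : ∀ j : ℕ, Real.log (t ^ j / M j) ≤ ωM (C * t) - ωM t := by
        intro j
        have : ωM t ≤ ωM (C * t) - Real.log (t ^ j / M j) := by
          rw [hω t h0]
          apply ciSup_le
          intro k
          linarith [hcore j k]
        linarith
      have h2 : ωM t ≤ ωM (C * t) - ωM t := by
        conv_lhs => rw [hω t h0]
        exact ciSup_le h1
      linarith
  · rintro ⟨H, hH1, hH⟩
    have hH0 : (0:ℝ) < H := lt_of_lt_of_le one_pos hH1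
    have heH : (1:ℝ) ≤ Real.exp H := Real.one_le_exp (by linarith)
    refine ⟨Real.exp H * H, by nlinarith, fun j k => ?_⟩
    rcases Nat.eq_zero_or_pos (j + k) with hn | hn
    · obtain ⟨hj, hk⟩ := Nat.add_eq_zero.mp hn
      simp [hj, hk, hM0]
    · set n := j + k with hn_def
      set s := μ (n + 1) with hs_def
      have hs1 : 1 ≤ s := hμpos _
      have hs : (0 : ℝ) < s := lt_of_lt_of_le one_pos hs1
      have hu : (0:ℝ) < s / H := by positivity
      have h2 := hH (s / H) hu.le
      have hHs : H * (s / H) = s := by field_simp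
      rw [hHs, hωeq n] at h2
      have hj' := hωle (s / H) hu j
      have hk' := hωle (s / H) hu k
      have haj : (0:ℝ) < (s / H) ^ j / M j := div_pos (pow_pos hu j) (hMpos j)
      have hak : (0:ℝ) < (s / H) ^ k / M k := div_pos (pow_pos hu k) (hMpos k)
      have hc : (0:ℝ) < s ^ n / M n := div_pos (pow_pos hs n) (hMpos n)
      have hlog : Real.log ((s / H) ^ j / M j * ((s / H) ^ k / M k)) ≤
          Real.log (s ^ n / M n) + H := by
        rw [Real.log_mul haj.ne' hak.ne']
        linarith
      have hexp : (s / H) ^ j / M j * ((s / H) ^ k / M k) ≤ s ^ n / M n * Real.exp H := by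
        have := Real.exp_le_exp.mpr hlog
        rwa [Real.exp_log (mul_pos haj hak), Real.exp_add, Real.exp_log hc] at this
      -- rearrange: M n ≤ exp H * H^n * M j * M k
      have hmain : M n ≤ Real.exp H * H ^ n * M j * M k := by
        have h3 : (s / H) ^ j / M j * ((s / H) ^ k / M k) = s ^ n / (H ^ n * (M j * M k)) := by
          rw [div_mul_div_comm, ← pow_add, ← hn_def, div_pow, div_div]
        rw [h3, div_mul_eq_mul_div,
          div_le_div_iff₀ (mul_pos (pow_pos hH0 n) (mul_pos (hMpos j) (hMpos k))) (hMpos n)] at hexp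
        have hsn : (0:ℝ) < s ^ n := by positivity
        have h5 : s ^ n * M n ≤ s ^ n * (Real.exp H * H ^ n * M j * M k) :=
          hexp.trans_eq (by ring)
        exact le_of_mul_le_mul_left h5 hsn
      calc M (j + k) = M n := rfl
        _ ≤ Real.exp H * H ^ n * M j * M k := hmain
        _ ≤ (Real.exp H * H) ^ n * M j * M k := by
            have h4 : Real.exp H * H ^ n ≤ (Real.exp H * H) ^ n := by
              rw [mul_pow]
              apply mul_le_mul_of_nonneg_right _ (by positivity)
              exact le_self_pow₀ (by linarith) (by omega)
            have := mul_le_mul_of_nonneg_right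
              (mul_le_mul_of_nonneg_right h4 (hMpos j).le) (hMpos k).le
            linarith
end

section
/- Let M be a weight sequence. Then (M_k/k!)^{1/k} → ∞ as k → ∞ if and only if ω_M(t) = o(t) as t → ∞, where ω_M(t) = sup_k log(t^k/M_k). -/
open MeasureTheory Set Filter Asymptotics

theorem stmt_6 (μ M : ℕ → ℝ) (hμ0 : μ 0 = 1) (hμ1 : 1 ≤ μ 1)
    (hμmono : Monotone μ) (hμtop : Tendsto μ atTop atTop)
    (hM : ∀ k, M k = ∏ i ∈ Finset.range (k + 1), μ i)
    (ωM : ℝ → ℝ) (hω0 : ωM 0 = 0)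
    (hω : ∀ t, 0 < t → ωM t = ⨆ k : ℕ, Real.log (t ^ k / M k)) :
    Tendsto (fun k : ℕ => (M k / k.factorial) ^ (1 / (k : ℝ))) atTop atTop ↔
      ωM =o[atTop] (fun t : ℝ => t) := by
  have hμ1' : ∀ i, 1 ≤ μ i := fun i => hμ0 ▸ hμmono (Nat.zero_le i)
  have hM1 : ∀ k, 1 ≤ M k := fun k => by
    rw [hM]
    induction k with
    | zero => simpa using hμ1' 0
    | succ k ih =>
      rw [Finset.prod_range_succ]
      exact one_le_mul_of_one_le_of_one_le ih (hμ1' (k+1))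
  have hMpos : ∀ k, 0 < M k := fun k => lt_of_lt_of_le one_pos (hM1 k)
  have hM0 : M 0 = 1 := by rw [hM]; simpa using hμ0
  -- boundedness of the family defining the sup
  have hbdd : ∀ t : ℝ, 0 < t →
      BddAbove (Set.range fun k : ℕ => Real.log (t ^ k / M k)) := by
    intro t ht
    set s : ℝ := max 1 t + 1 with hs
    have hs1 : (1:ℝ) ≤ s := by
      have := le_max_left 1 t; linarith
    have hst : t ≤ s := by
      have := le_max_right 1 t; linarith
    obtain ⟨N, hN⟩ := Filter.eventually_atTop.1 (hμtop.eventually_ge_atTop s)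
    have key : ∀ k, s ^ k ≤ s ^ N * M k := by
      intro k
      induction k with
      | zero => simpa [hM0] using one_le_pow₀ hs1 (n := N)
      | succ k ih =>
        rcases le_or_gt N (k + 1) with hk | hk
        · have hμk : s ≤ μ (k + 1) := hN _ hk
          have hMk : 0 < M k := hMpos k
          calc s ^ (k + 1) = s ^ k * s := by ring
            _ ≤ (s ^ N * M k) * μ (k + 1) := by
                apply mul_le_mul ih hμk (by linarith) (by positivity)
            _ = s ^ N * M (k + 1) := by
                rw [hM (k + 1), Finset.prod_range_succ, ← hM k]; ring
        · calc s ^ (k + 1) ≤ s ^ N := pow_le_pow_right₀ hs1 hk.le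
            _ ≤ s ^ N * M (k + 1) := le_mul_of_one_le_right (by positivity) (hM1 _)
    refine ⟨Real.log (s ^ N), ?_⟩
    rintro x ⟨k, rfl⟩
    have h1 : t ^ k / M k ≤ s ^ N := by
      rw [div_le_iff₀ (hMpos k)]
      calc t ^ k ≤ s ^ k := pow_le_pow_left₀ ht.le hst k
        _ ≤ s ^ N * M k := key k
    exact Real.log_le_log (div_pos (pow_pos ht k) (hMpos k)) h1
  have hle : ∀ t : ℝ, 0 < t → ∀ k, Real.log (t ^ k / M k) ≤ ωM t := by
    intro t ht k
    rw [hω t ht]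
    exact le_ciSup (hbdd t ht) k
  have hωnn : ∀ t : ℝ, 0 < t → 0 ≤ ωM t := by
    intro t ht
    have := hle t ht 0
    simpa [hM0] using this
  constructor
  · -- tendsto → littleO
    intro h
    rw [isLittleO_iff]
    intro ε hε
    set C : ℝ := 2 / ε with hCdef
    have hC : 0 < C := by positivity
    obtain ⟨k0, hk0⟩ := Filter.eventually_atTop.1
      (Filter.tendsto_atTop.1 h (Real.exp 1 * C))
    set K : ℕ := max k0 1 with hK
    -- for k ≥ K : M k ≥ (C k)^k
    have hMlow : ∀ k, K ≤ k → (C * k) ^ k ≤ M k := by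
      intro k hk
      have hk1 : 1 ≤ k := le_trans (le_max_right k0 1) hk
      have hkpos : (0:ℝ) < k := by exact_mod_cast hk1
      have hkne : (k:ℝ) ≠ 0 := ne_of_gt hkpos
      have hfac : (0:ℝ) < (k.factorial : ℝ) := by
        exact_mod_cast k.factorial_pos
      have hr : Real.exp 1 * C ≤ (M k / k.factorial) ^ (1 / (k:ℝ)) :=
        hk0 k (le_trans (le_max_left k0 1) hk)
      have hrpos : (0:ℝ) ≤ M k / k.factorial := (div_pos (hMpos k) hfac).le
      have h1 : (Real.exp 1 * C) ^ k ≤ M k / k.factorial := by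
        have h2 : ((Real.exp 1 * C)) ^ k ≤ ((M k / k.factorial) ^ (1 / (k:ℝ))) ^ k :=
          pow_le_pow_left₀ (by positivity) hr k
        rwa [← Real.rpow_natCast ((M k / k.factorial) ^ (1 / (k:ℝ))) k,
          ← Real.rpow_mul hrpos, one_div, inv_mul_cancel₀ hkne, Real.rpow_one] at h2
      -- k^k ≤ e^k * k!
      have h3 : (k:ℝ) ^ k ≤ Real.exp 1 ^ k * k.factorial := by
        have := Real.pow_div_factorial_le_exp (k:ℝ) (le_of_lt hkpos) k
        rw [div_le_iff₀ hfac] at this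
        calc (k:ℝ) ^ k ≤ Real.exp (k:ℝ) * k.factorial := this
          _ = Real.exp 1 ^ k * k.factorial := by
              rw [← Real.exp_nat_mul, mul_one]
      calc (C * k) ^ k = C ^ k * (k:ℝ) ^ k := by rw [mul_pow]
        _ ≤ C ^ k * (Real.exp 1 ^ k * k.factorial) := by
            apply mul_le_mul_of_nonneg_left h3 (by positivity)
        _ = (Real.exp 1 * C) ^ k * k.factorial := by rw [mul_pow]; ring
        _ ≤ (M k / k.factorial) * k.factorial := by
            apply mul_le_mul_of_nonneg_right h1 hfac.le
        _ = M k := div_mul_cancel₀ _ (ne_of_gt hfac)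
    -- bound on ωM for t ≥ 1
    have hωbound : ∀ t : ℝ, 1 ≤ t → ωM t ≤ max ((K:ℝ) * Real.log t) (t / C) := by
      intro t ht1
      have ht : (0:ℝ) < t := lt_of_lt_of_le one_pos ht1
      rw [hω t ht]
      apply ciSup_le
      intro k
      rcases lt_or_ge k K with hk | hk
      · refine le_trans ?_ (le_max_left _ _)
        have hlt : Real.log (t ^ k / M k) ≤ Real.log (t ^ k) := by
          apply Real.log_le_log (div_pos (pow_pos ht k) (hMpos k))
          exact div_le_self (by positivity) (hM1 k)
        rw [Real.log_pow] at hlt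
        refine hlt.trans ?_
        have hlog : 0 ≤ Real.log t := Real.log_nonneg ht1
        have : (k:ℝ) ≤ K := by exact_mod_cast hk.le
        exact mul_le_mul_of_nonneg_right this hlog
      · refine le_trans ?_ (le_max_right _ _)
        have hk1 : 1 ≤ k := le_trans (le_max_right k0 1) hk
        have hkpos : (0:ℝ) < k := by exact_mod_cast hk1
        have hCk : (0:ℝ) < C * k := by positivity
        have h1 : Real.log (t ^ k / M k) ≤ Real.log (t ^ k / (C * k) ^ k) := by
          apply Real.log_le_log (div_pos (pow_pos ht k) (hMpos k))
          exact div_le_div_of_nonneg_left (by positivity) (by positivity) (hMlow k hk)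
        refine h1.trans ?_
        rw [← div_pow, Real.log_pow, Real.log_div (ne_of_gt ht) (ne_of_gt hCk)]
        have h2 : Real.log t - Real.log (C * k) ≤ t / (C * k) - 1 := by
          have := Real.log_le_sub_one_of_pos (show (0:ℝ) < t / (C * k) by positivity)
          rwa [Real.log_div (ne_of_gt ht) (ne_of_gt hCk)] at this
        calc (k:ℝ) * (Real.log t - Real.log (C * k)) ≤ (k:ℝ) * (t / (C * k) - 1) :=
              mul_le_mul_of_nonneg_left h2 hkpos.le
          _ = t / C - k := by field_simp
          _ ≤ t / C := by linarith
    -- conclude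
    have hlog : (fun t : ℝ => (K:ℝ) * Real.log t) =o[atTop] (fun t : ℝ => t) :=
      (Real.isLittleO_log_id_atTop.const_mul_left _)
    have h2 := (isLittleO_iff.1 hlog) (show (0:ℝ) < ε by exact hε)
    filter_upwards [h2, Filter.eventually_ge_atTop (1:ℝ)] with t h2t ht1
    have ht : (0:ℝ) < t := lt_of_lt_of_le one_pos ht1
    have hb := hωbound t ht1
    have hlogb : (K:ℝ) * Real.log t ≤ ε * t := by
      have := le_trans (le_abs_self _) h2t
      rwa [Real.norm_eq_abs, abs_of_pos ht] at this
    have hdivb : t / C ≤ ε * t := by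
      rw [hCdef]
      rw [div_div_eq_mul_div, div_le_iff₀ (by norm_num : (0:ℝ) < 2)]
      nlinarith [hωnn t ht]
    have : ωM t ≤ ε * t := le_trans hb (max_le hlogb hdivb)
    rw [Real.norm_eq_abs, Real.norm_eq_abs, abs_of_nonneg (hωnn t ht), abs_of_pos ht]
    exact this
  · -- littleO → tendsto
    intro h
    rw [Filter.tendsto_atTop]
    intro C
    set C' : ℝ := max C 1 with hC'def
    have hC' : (0:ℝ) < C' := lt_of_lt_of_le one_pos (le_max_right _ _)
    set ε : ℝ := 1 / (Real.exp 1 * C') with hεdef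
    have hε : 0 < ε := by positivity
    obtain ⟨T, hT⟩ := Filter.eventually_atTop.1 ((isLittleO_iff.1 h) hε)
    filter_upwards [Filter.eventually_ge_atTop (max 1 ⌈ε * T⌉₊)] with k hk
    have hk1 : 1 ≤ k := le_trans (le_max_left _ _) hk
    have hkpos : (0:ℝ) < k := by exact_mod_cast hk1
    have hkne : (k:ℝ) ≠ 0 := ne_of_gt hkpos
    set t : ℝ := k / ε with htdef
    have htT : T ≤ t := by
      have h1 : (⌈ε * T⌉₊ : ℝ) ≤ k := by
        exact_mod_cast Nat.cast_le.2 (le_trans (le_max_right 1 _) hk)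
      have h2 : ε * T ≤ k := le_trans (Nat.le_ceil _) h1
      rw [htdef, le_div_iff₀ hε]
      linarith
    have ht : (0:ℝ) < t := by positivity
    have hωt : ωM t ≤ ε * t := by
      have := hT t htT
      rw [Real.norm_eq_abs, Real.norm_eq_abs, abs_of_pos ht] at this
      exact le_trans (le_abs_self _) this
    have hεt : ε * t = k := by
      rw [htdef]; field_simp
    have h1 : Real.log (t ^ k / M k) ≤ (k:ℝ) := by
      rw [← hεt]; exact le_trans (hle t ht k) hωt
    have h2 : t ^ k / M k ≤ Real.exp k := by
      rw [← Real.exp_log (div_pos (pow_pos ht k) (hMpos k))]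
      exact Real.exp_le_exp.2 h1
    have h3 : t ^ k ≤ Real.exp 1 ^ k * M k := by
      rw [div_le_iff₀ (hMpos k)] at h2
      calc t ^ k ≤ Real.exp (k:ℝ) * M k := h2
        _ = Real.exp 1 ^ k * M k := by rw [← Real.exp_nat_mul, mul_one]
    have hfac : (0:ℝ) < (k.factorial : ℝ) := by exact_mod_cast k.factorial_pos
    have hfacle : ((k.factorial : ℝ)) ≤ (k:ℝ) ^ k := by
      exact_mod_cast Nat.factorial_le_pow k
    -- C'^k ≤ M k / k!
    have key : C' ^ k ≤ M k / k.factorial := by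
      rw [le_div_iff₀ hfac]
      have hCk : C' ^ k * (k.factorial : ℝ) ≤ C' ^ k * (k:ℝ) ^ k :=
        mul_le_mul_of_nonneg_left hfacle (by positivity)
      have heq : C' ^ k * (k:ℝ) ^ k = (C' * k) ^ k := (mul_pow _ _ _).symm
      have hC'k : C' * k = t / Real.exp 1 := by
        rw [htdef, hεdef]
        field_simp
      have h4 : (C' * k) ^ k ≤ M k := by
        rw [hC'k, div_pow, div_le_iff₀ (by positivity : (0:ℝ) < Real.exp 1 ^ k)]
        calc t ^ k ≤ Real.exp 1 ^ k * M k := h3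
          _ = M k * Real.exp 1 ^ k := by ring
      calc C' ^ k * (k.factorial : ℝ) ≤ (C' * k) ^ k := heq ▸ hCk
        _ ≤ M k := h4
    have hfin : C' ≤ (M k / k.factorial) ^ (1 / (k:ℝ)) := by
      have h5 : (C' ^ k : ℝ) ^ (1 / (k:ℝ)) ≤ (M k / k.factorial) ^ (1 / (k:ℝ)) :=
        Real.rpow_le_rpow (by positivity) key (by positivity)
      rwa [← Real.rpow_natCast C' k, ← Real.rpow_mul hC'.le,
        mul_one_div, div_self hkne, Real.rpow_one] at h5
    exact le_trans (le_max_left C 1) hfin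
end

section
/- Let M be a weight sequence with quotients μ_k. For a positive integer n, define M^{[n]}_j := M_{nj}^{1/n}. Then M^{[n]} is a weight sequence, its quotients satisfy μ^{[n]}_j = (μ_{n(j-1)+1} ⋯ μ_{nj})^{1/n}, and there exists A ≥ 1 such that μ_{2j} ≤ A μ^{[4]}_j for all j ≥ 1. Moreover M_j ≤ M^{[n]}_j for all j, and if M has moderate growth, then sup_j (M^{[n]}_j / M_j)^{1/j} < ∞. -/
/-! Since `M_{a+n} = M_a · μ_{a+1} ⋯ μ_{a+n}`, the quotient `μ^{[n]}_j` is the geometric mean of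
the `j`-th block of `n` consecutive quotients `μ_i`, so monotonicity of `μ` squeezes it between
`μ_{n(j-1)+1}` and `μ_{nj}`. This makes `M^{[n]}` a weight sequence, and as `2j ≤ 4j - 3` for
`j ≥ 2` it gives the comparison with `μ^{[4]}`. Monotonicity also makes `M` supermultiplicative,
so `M_j^n ≤ M_{nj}`; conversely, iterating moderate growth gives `M_{nj} ≤ C^{n²j} M_j^n`, hence
`(M^{[n]}_j / M_j)^{1/j} ≤ C^n`. -/

open MeasureTheory Set Filter

lemma Real.le_rpow_one_div_of_pow_le {x y : ℝ} {n : ℕ} (hx : 0 ≤ x) (hy : 0 ≤ y) (hn : n ≠ 0)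
    (h : x ^ n ≤ y) : x ≤ y ^ (1 / (n : ℝ)) := by
  rwa [one_div, Real.le_rpow_inv_iff_of_pos hx hy (by positivity), Real.rpow_natCast]

lemma Real.rpow_one_div_le_of_le_pow {x y : ℝ} {n : ℕ} (hx : 0 ≤ x) (hy : 0 ≤ y) (hn : n ≠ 0)
    (h : x ≤ y ^ n) : x ^ (1 / (n : ℝ)) ≤ y := by
  rwa [one_div, Real.rpow_inv_le_iff_of_pos hx hy (by positivity), Real.rpow_natCast]

section Monotone

variable {μ : ℕ → ℝ}

lemma Monotone.pow_le_prod_Icc (hmono : Monotone μ) (hμ : ∀ i, 0 ≤ μ i) (a n : ℕ) :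
    μ (a + 1) ^ n ≤ ∏ i ∈ Finset.Icc (a + 1) (a + n), μ i := by
  calc μ (a + 1) ^ n = ∏ _i ∈ Finset.Icc (a + 1) (a + n), μ (a + 1) := by simp
    _ ≤ _ := Finset.prod_le_prod (fun _ _ => hμ _) fun i hi => hmono (Finset.mem_Icc.1 hi).1

lemma Monotone.prod_Icc_le_pow (hmono : Monotone μ) (hμ : ∀ i, 0 ≤ μ i) (a n : ℕ) :
    ∏ i ∈ Finset.Icc (a + 1) (a + n), μ i ≤ μ (a + n) ^ n := by
  calc ∏ i ∈ Finset.Icc (a + 1) (a + n), μ i ≤ ∏ _i ∈ Finset.Icc (a + 1) (a + n), μ (a + n) :=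
        Finset.prod_le_prod (fun _ _ => hμ _) fun i hi => hmono (Finset.mem_Icc.1 hi).2
    _ = μ (a + n) ^ n := by simp

lemma Monotone.le_rpow_prod_Icc (hmono : Monotone μ) (hμ : ∀ i, 0 ≤ μ i) (a : ℕ) {n : ℕ}
    (hn : n ≠ 0) : μ (a + 1) ≤ (∏ i ∈ Finset.Icc (a + 1) (a + n), μ i) ^ (1 / (n : ℝ)) :=
  Real.le_rpow_one_div_of_pow_le (hμ _) (Finset.prod_nonneg fun _ _ => hμ _) hn
    (hmono.pow_le_prod_Icc hμ a n)

lemma Monotone.rpow_prod_Icc_le (hmono : Monotone μ) (hμ : ∀ i, 0 ≤ μ i) (a : ℕ) {n : ℕ}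
    (hn : n ≠ 0) : (∏ i ∈ Finset.Icc (a + 1) (a + n), μ i) ^ (1 / (n : ℝ)) ≤ μ (a + n) :=
  Real.rpow_one_div_le_of_le_pow (Finset.prod_nonneg fun _ _ => hμ _) (hμ _) hn
    (hmono.prod_Icc_le_pow hμ a n)

lemma Monotone.one_le (hmono : Monotone μ) (hμ0 : μ 0 = 1) (hμ1 : 1 ≤ μ 1) (i : ℕ) : 1 ≤ μ i := by
  rcases i with _ | i
  · exact hμ0.ge
  · exact hμ1.trans (hmono (Nat.succ_pos i))

lemma Monotone.apply_two_mul_le (hmono : Monotone μ) (hμ : ∀ i, 1 ≤ μ i) (i : ℕ) :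
    μ (2 * (i + 1)) ≤ μ 2 * μ (4 * i + 1) := by
  rcases i with _ | i
  · simpa using le_mul_of_one_le_right (zero_le_one.trans (hμ 2)) (hμ 1)
  · calc μ (2 * (i + 1 + 1)) ≤ μ (4 * (i + 1) + 1) := hmono (by omega)
      _ ≤ μ 2 * μ (4 * (i + 1) + 1) := le_mul_of_one_le_left (zero_le_one.trans (hμ _)) (hμ 2)

lemma Monotone.le_succ_of_block_bounds {ν : ℕ → ℝ} {n : ℕ} (hmono : Monotone μ)
    (hlower : ∀ i, μ (n * i + 1) ≤ ν (i + 1)) (hupper : ∀ i, ν (i + 1) ≤ μ (n * i + n)) {j : ℕ}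
    (hj : 1 ≤ j) : ν j ≤ ν (j + 1) := by
  obtain ⟨i, rfl⟩ := Nat.exists_eq_add_of_le' hj
  calc ν (i + 1) ≤ μ (n * i + n) := hupper i
    _ ≤ μ (n * (i + 1) + 1) := hmono (by rw [mul_add_one]; omega)
    _ ≤ ν (i + 1 + 1) := hlower (i + 1)

lemma Monotone.tendsto_atTop_of_block_bounds {ν : ℕ → ℝ} {n : ℕ} (hmono : Monotone μ)
    (htop : Tendsto μ atTop atTop) (hn : 0 < n) (hlower : ∀ i, μ (n * i + 1) ≤ ν (i + 1)) :
    Tendsto ν atTop atTop := by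
  refine tendsto_atTop_mono' atTop ?_ htop
  filter_upwards [eventually_ge_atTop 1] with j hj
  obtain ⟨i, rfl⟩ := Nat.exists_eq_add_of_le' hj
  exact (hmono (by nlinarith)).trans (hlower i)

end Monotone

section Weight

variable {μ M : ℕ → ℝ}

lemma weight_add_eq_mul_prod_Icc (hM : ∀ k, M k = ∏ i ∈ Finset.range (k + 1), μ i) (a n : ℕ) :
    M (a + n) = M a * ∏ i ∈ Finset.Icc (a + 1) (a + n), μ i := by
  rw [hM, hM, ← Finset.prod_range_mul_prod_Ico _ (by omega : a + 1 ≤ a + n + 1),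
    Finset.Ico_add_one_right_eq_Icc]

lemma one_le_weight (hμ : ∀ i, 1 ≤ μ i) (hM : ∀ k, M k = ∏ i ∈ Finset.range (k + 1), μ i)
    (k : ℕ) : 1 ≤ M k :=
  hM k ▸ Finset.one_le_prod fun i _ => hμ i

lemma weight_mul_le_weight_add (hmono : Monotone μ) (hμ0 : μ 0 = 1) (hμ : ∀ i, 1 ≤ μ i)
    (hM : ∀ k, M k = ∏ i ∈ Finset.range (k + 1), μ i) (a b : ℕ) : M a * M b ≤ M (a + b) := by
  have hsucc : ∀ k, M (k + 1) = M k * μ (k + 1) := fun k => by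
    rw [hM, hM, Finset.prod_range_succ]
  induction b with
  | zero => simp [hM 0, hμ0]
  | succ b ih =>
    rw [hsucc, ← add_assoc, hsucc, ← mul_assoc]
    exact mul_le_mul ih (hmono (by omega)) (zero_le_one.trans (hμ _))
      (zero_le_one.trans (one_le_weight hμ hM _))

lemma rpow_one_div_div_eq_rpow_prod_Icc (hμ : ∀ i, 0 ≤ μ i) (hM_pos : ∀ k, 0 < M k)
    (hM : ∀ k, M k = ∏ i ∈ Finset.range (k + 1), μ i) (a n : ℕ) :
    M (a + n) ^ (1 / (n : ℝ)) / M a ^ (1 / (n : ℝ)) =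
      (∏ i ∈ Finset.Icc (a + 1) (a + n), μ i) ^ (1 / (n : ℝ)) := by
  rw [weight_add_eq_mul_prod_Icc hM,
    Real.mul_rpow (hM_pos a).le (Finset.prod_nonneg fun _ _ => hμ _),
    mul_div_cancel_left₀ _ (Real.rpow_pos_of_pos (hM_pos a) _).ne']

end Weight

lemma pow_le_apply_mul_of_supermultiplicative {M : ℕ → ℝ} (h0 : 1 ≤ M 0) (hM : ∀ k, 0 ≤ M k)
    (hsup : ∀ a b, M a * M b ≤ M (a + b)) (n j : ℕ) : M j ^ n ≤ M (n * j) := by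
  induction n with
  | zero => simpa using h0
  | succ n ih =>
    calc M j ^ (n + 1) = M j ^ n * M j := pow_succ _ _
      _ ≤ M (n * j) * M j := mul_le_mul_of_nonneg_right ih (hM j)
      _ ≤ M ((n + 1) * j) := by rw [Nat.succ_mul]; exact hsup _ _

lemma apply_mul_le_of_moderateGrowth {M : ℕ → ℝ} {C : ℝ} (hC : 1 ≤ C) (h0 : M 0 ≤ 1)
    (hM : ∀ k, 0 ≤ M k) (hmg : ∀ j k, M (j + k) ≤ C ^ (j + k) * M j * M k) (n j : ℕ) :
    M (n * j) ≤ C ^ (n * n * j) * M j ^ n := by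
  induction n with
  | zero => simpa using h0
  | succ n ih =>
    calc M ((n + 1) * j) = M (n * j + j) := by rw [Nat.succ_mul]
      _ ≤ C ^ (n * j + j) * M (n * j) * M j := hmg _ _
      _ ≤ C ^ (n * j + j) * (C ^ (n * n * j) * M j ^ n) * M j := by gcongr; exact hM j
      _ = C ^ (n * j + j + n * n * j) * M j ^ (n + 1) := by ring
      _ ≤ C ^ ((n + 1) * (n + 1) * j) * M j ^ (n + 1) := by
        gcongr
        · exact pow_nonneg (hM j) _
        · nlinarith

lemma le_rpow_one_div_apply_mul_of_supermultiplicative {M : ℕ → ℝ} (h0 : 1 ≤ M 0)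
    (hM : ∀ k, 0 ≤ M k) (hsup : ∀ a b, M a * M b ≤ M (a + b)) {n : ℕ} (hn : n ≠ 0) (j : ℕ) :
    M j ≤ M (n * j) ^ (1 / (n : ℝ)) :=
  Real.le_rpow_one_div_of_pow_le (hM j) (hM _) hn
    (pow_le_apply_mul_of_supermultiplicative h0 hM hsup n j)

lemma rpow_one_div_div_le_of_moderateGrowth {M : ℕ → ℝ} {C : ℝ} (hC : 1 ≤ C) (h0 : M 0 ≤ 1)
    (hM : ∀ k, 0 < M k) (hmg : ∀ j k, M (j + k) ≤ C ^ (j + k) * M j * M k) {n j : ℕ}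
    (hn : n ≠ 0) (hj : j ≠ 0) : (M (n * j) ^ (1 / (n : ℝ)) / M j) ^ (1 / (j : ℝ)) ≤ C ^ n := by
  have hC0 : 0 ≤ C := zero_le_one.trans hC
  have hroot : M (n * j) ^ (1 / (n : ℝ)) ≤ C ^ (n * j) * M j := by
    refine Real.rpow_one_div_le_of_le_pow (hM _).le
      (mul_nonneg (pow_nonneg hC0 _) (hM j).le) hn ?_
    calc M (n * j) ≤ C ^ (n * n * j) * M j ^ n :=
          apply_mul_le_of_moderateGrowth hC h0 (fun k => (hM k).le) hmg n j
      _ = (C ^ (n * j) * M j) ^ n := by rw [mul_pow, ← pow_mul]; ring_nf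
  refine Real.rpow_one_div_le_of_le_pow (div_nonneg (Real.rpow_nonneg (hM _).le _) (hM j).le)
    (pow_nonneg hC0 _) hj ?_
  rwa [div_le_iff₀ (hM j), ← pow_mul]

theorem stmt_10 (μ M : ℕ → ℝ) (hμ0 : μ 0 = 1) (hμ1 : 1 ≤ μ 1)
    (hμmono : Monotone μ) (hμtop : Tendsto μ atTop atTop)
    (hM : ∀ k, M k = ∏ i ∈ Finset.range (k + 1), μ i)
    (Mn : ℕ → ℕ → ℝ)
    (hMn : ∀ n, 0 < n → ∀ j, Mn n j = (M (n * j)) ^ (1 / (n : ℝ)))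
    (μn : ℕ → ℕ → ℝ)
    (hμn : ∀ n, 0 < n → ∀ j, 1 ≤ j → μn n j = Mn n j / Mn n (j - 1)) :
    (∀ n, 0 < n → Mn n 0 = 1 ∧ 1 ≤ μn n 1 ∧
        (∀ j, 1 ≤ j → μn n j ≤ μn n (j + 1)) ∧
        Tendsto (μn n) atTop atTop) ∧
    (∀ n, 0 < n → ∀ j, 1 ≤ j →
        μn n j = (∏ i ∈ Finset.Icc (n * (j - 1) + 1) (n * j), μ i) ^ (1 / (n : ℝ))) ∧
    (∃ A : ℝ, 1 ≤ A ∧ ∀ j, 1 ≤ j → μ (2 * j) ≤ A * μn 4 j) ∧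
    (∀ n, 0 < n → ∀ j, M j ≤ Mn n j) ∧
    (∀ n, 0 < n → (∃ C : ℝ, 1 ≤ C ∧ ∀ j k, M (j + k) ≤ C ^ (j + k) * M j * M k) →
        ∃ B : ℝ, ∀ j, 1 ≤ j → (Mn n j / M j) ^ (1 / (j : ℝ)) ≤ B) := by
  have hμ : ∀ i, 1 ≤ μ i := hμmono.one_le hμ0 hμ1
  have hμ_nonneg : ∀ i, 0 ≤ μ i := fun i => zero_le_one.trans (hμ i)
  have hM_one_le : ∀ k, 1 ≤ M k := one_le_weight hμ hM
  have hM_pos : ∀ k, 0 < M k := fun k => zero_lt_one.trans_le (hM_one_le k)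
  have hM0 : M 0 = 1 := by simp [hM, hμ0]
  have hblock : ∀ n, 0 < n → ∀ i,
      μn n (i + 1) = (∏ k ∈ Finset.Icc (n * i + 1) (n * i + n), μ k) ^ (1 / (n : ℝ)) := by
    intro n hn i
    rw [hμn n hn _ (Nat.le_add_left 1 i), hMn n hn, hMn n hn, Nat.add_sub_cancel, mul_add_one,
      rpow_one_div_div_eq_rpow_prod_Icc hμ_nonneg hM_pos hM]
  have hlower : ∀ n, 0 < n → ∀ i, μ (n * i + 1) ≤ μn n (i + 1) := fun n hn i =>
    hblock n hn i ▸ hμmono.le_rpow_prod_Icc hμ_nonneg _ hn.ne'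
  have hupper : ∀ n, 0 < n → ∀ i, μn n (i + 1) ≤ μ (n * i + n) := fun n hn i =>
    hblock n hn i ▸ hμmono.rpow_prod_Icc_le hμ_nonneg _ hn.ne'
  refine ⟨fun n hn => ⟨?_, ?_, ?_, ?_⟩, ?_, ⟨μ 2, hμ 2, ?_⟩, fun n hn j => ?_, ?_⟩
  · rw [hMn n hn, mul_zero, hM0, Real.one_rpow]
  · simpa using (hμ 1).trans (hlower n hn 0)
  · exact fun j => hμmono.le_succ_of_block_bounds (hlower n hn) (hupper n hn)
  · exact hμmono.tendsto_atTop_of_block_bounds hμtop hn (hlower n hn)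
  · intro n hn j hj
    obtain ⟨i, rfl⟩ := Nat.exists_eq_add_of_le' hj
    rw [hblock n hn i, Nat.add_sub_cancel, mul_add_one]
  · intro j hj
    obtain ⟨i, rfl⟩ := Nat.exists_eq_add_of_le' hj
    exact (hμmono.apply_two_mul_le hμ i).trans
      (mul_le_mul_of_nonneg_left (hlower 4 (by norm_num) i) (hμ_nonneg 2))
  · rw [hMn n hn]
    exact le_rpow_one_div_apply_mul_of_supermultiplicative (hM_one_le 0) (fun k => (hM_pos k).le)
      (weight_mul_le_weight_add hμmono hμ0 hμ hM) hn.ne' j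
  · rintro n hn ⟨C, hC, hmg⟩
    exact ⟨C ^ n, fun j hj => hMn n hn j ▸
      rpow_one_div_div_le_of_moderateGrowth hC hM0.le hM_pos hmg hn.ne' (by omega)⟩
end

section
/- Let M be a non-quasianalytic weight sequence (μ_k = M_k/M_{k-1} increasing to ∞ with Σ 1/μ_k < ∞) and M' a positive sequence. If M' ≺_{SV} M, i.e., there exists s ≥ 1 such that sup_{j≥1} [ (1/j) · sup_{0≤i<j} (M'_j/(s^j M_i))^{1/(j-i)} · Σ_{k≥j} 1/μ_k ] < ∞, then for every positive integer n, M'^{[n]} ≺_{SV} M^{[4n]}, where N^{[m]}_j := N_{mj}^{1/m}. -/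
open MeasureTheory Set Filter

/-- The mixed condition `M' ≺_{SV} N`, with `N` a sequence whose quotients are
`N k / N (k-1)`:  there is `s ≥ 1` such that
`sup_{j≥1} (1/j) · sup_{0≤i<j} (M'_j/(s^j N_i))^{1/(j-i)} · Σ_{k≥j} 1/ν_k < ∞`. -/
def SV (M' N : ℕ → ℝ) : Prop :=
  ∃ s : ℝ, 1 ≤ s ∧ ∃ C : ℝ, ∀ j, 1 ≤ j → ∀ i, i < j →
    (M' j / (s ^ j * N i)) ^ (1 / ((j : ℝ) - (i : ℝ))) / (j : ℝ) *
      (∑' k : ℕ, 1 / (N (j + k) / N (j + k - 1))) ≤ C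

theorem stmt_11 (μ M : ℕ → ℝ) (hμ0 : μ 0 = 1) (hμ1 : 1 ≤ μ 1)
    (hμmono : Monotone μ) (hμtop : Tendsto μ atTop atTop)
    (hM : ∀ k, M k = ∏ i ∈ Finset.range (k + 1), μ i)
    (hnqa : Summable (fun k => 1 / μ k))
    (M' : ℕ → ℝ) (hM'pos : ∀ k, 0 < M' k)
    (hSV : SV M' M) :
    ∀ n : ℕ, 1 ≤ n →
      SV (fun j => (M' (n * j)) ^ (1 / (n : ℝ)))
        (fun j => (M (4 * n * j)) ^ (1 / (4 * (n : ℝ)))) := by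
  have hμ1' : ∀ k, 1 ≤ μ k := fun k => hμ0 ▸ hμmono (Nat.zero_le k)
  have hμpos : ∀ k, (0:ℝ) < μ k := fun k => lt_of_lt_of_le one_pos (hμ1' k)
  have hM1 : ∀ k, 1 ≤ M k := by
    intro k
    rw [hM]
    calc (1:ℝ) = ∏ _i ∈ Finset.range (k+1), (1:ℝ) := by simp
      _ ≤ ∏ i ∈ Finset.range (k + 1), μ i :=
        Finset.prod_le_prod (by intro i _; norm_num) (fun i _ => hμ1' i)
  have hMpos : ∀ k, (0:ℝ) < M k := fun k => lt_of_lt_of_le one_pos (hM1 k)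
  have hMsucc : ∀ k, M (k+1) = M k * μ (k+1) := by
    intro k; rw [hM, hM, Finset.prod_range_succ]
  -- M a ^ 4 ≤ M (4 * a)
  have hM4 : ∀ a, M a ^ (4:ℕ) ≤ M (4 * a) := by
    intro a
    have h1 : M (4*a) = M a * ∏ t ∈ Finset.range (3*a), μ (a+1+t) := by
      rw [hM (4*a), hM a]
      rw [show 4*a+1 = (a+1) + 3*a by ring, Finset.prod_range_add]
    have h2 : M a ≤ μ a ^ a := by
      rw [hM, Finset.prod_range_succ', hμ0, mul_one]
      calc (∏ i ∈ Finset.range a, μ (i+1)) ≤ ∏ _i ∈ Finset.range a, μ a :=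
            Finset.prod_le_prod (fun i _ => (hμpos _).le)
              (fun i hi => hμmono (by have := Finset.mem_range.mp hi; omega))
        _ = μ a ^ a := by rw [Finset.prod_const, Finset.card_range]
    have h3 : μ a ^ (3*a) ≤ ∏ t ∈ Finset.range (3*a), μ (a+1+t) := by
      calc μ a ^ (3*a) = ∏ _t ∈ Finset.range (3*a), μ a := by
            rw [Finset.prod_const, Finset.card_range]
        _ ≤ _ := Finset.prod_le_prod (fun _ _ => (hμpos _).le)
            (fun t _ => hμmono (by omega))
    calc M a ^ (4:ℕ) = M a * (M a) ^ (3:ℕ) := by ring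
      _ ≤ M a * μ a ^ (3*a) := by
          have h5 : (M a) ^ (3:ℕ) ≤ μ a ^ (3*a) := by
            calc (M a) ^ (3:ℕ) ≤ (μ a ^ a) ^ (3:ℕ) :=
                  pow_le_pow_left₀ (hMpos a).le h2 3
              _ = μ a ^ (3*a) := by rw [← pow_mul]; ring_nf
          exact mul_le_mul_of_nonneg_left h5 (hMpos a).le
      _ ≤ M a * ∏ t ∈ Finset.range (3*a), μ (a+1+t) :=
          mul_le_mul_of_nonneg_left h3 (hMpos a).le
      _ = M (4*a) := h1.symm
  -- tail sums of 1/μ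
  have hTsummable : ∀ J : ℕ, Summable (fun k => 1 / μ (J + k)) := by
    intro J
    have := hnqa.comp_injective (add_right_injective J)
    exact this
  have hTpos : ∀ J : ℕ, (0:ℝ) < ∑' k, 1 / μ (J + k) := by
    intro J
    exact Summable.tsum_pos (hTsummable J) (fun k => div_nonneg zero_le_one (hμpos _).le) 0
      (div_pos one_pos (hμpos _))
  obtain ⟨s, hs, C, hC⟩ := hSV
  have hspos : (0:ℝ) < s := lt_of_lt_of_le one_pos hs
  have hTrw : ∀ J, 1 ≤ J → (∑' k : ℕ, 1 / (M (J + k) / M (J + k - 1))) = ∑' k, 1 / μ (J + k) := by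
    intro J hJ
    apply tsum_congr
    intro k
    obtain ⟨J', rfl⟩ : ∃ J', J = J' + 1 := ⟨J - 1, by omega⟩
    rw [show J' + 1 + k = (J' + k) + 1 by omega, show (J' + k) + 1 - 1 = J' + k from rfl]
    rw [hMsucc, mul_div_cancel_left₀ _ (hMpos _).ne']
  have hC2 : ∀ J, 1 ≤ J → ∀ I, I < J →
      (M' J / (s ^ J * M I)) ^ (1 / ((J:ℝ) - (I:ℝ))) * (∑' k, 1 / μ (J + k)) ≤ C * J := by
    intro J hJ I hIJ
    have h := hC J hJ I hIJ
    rw [hTrw J hJ] at h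
    have hJpos : (0:ℝ) < J := by exact_mod_cast Nat.pos_of_ne_zero (by omega)
    calc (M' J / (s ^ J * M I)) ^ (1 / ((J:ℝ) - (I:ℝ))) * (∑' k, 1 / μ (J + k))
        = ((M' J / (s ^ J * M I)) ^ (1 / ((J:ℝ) - (I:ℝ))) / (J:ℝ) *
            (∑' k, 1 / μ (J + k))) * J := by field_simp
      _ ≤ C * J := mul_le_mul_of_nonneg_right h hJpos.le
  intro n hn
  have hn0 : (0:ℝ) < n := by exact_mod_cast hn
  set N : ℕ → ℝ := fun j => (M (4 * n * j)) ^ (1 / (4 * (n:ℝ))) with hNdef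
  have hNpos : ∀ j, 0 < N j := fun j => Real.rpow_pos_of_pos (hMpos _) _
  -- ratio bound for N
  have hNratio : ∀ b : ℕ, μ (4*n*b + 1) ≤ N (b+1) / N b := by
    intro b
    have hprod : M (4*n*(b+1)) = M (4*n*b) * ∏ t ∈ Finset.range (4*n), μ (4*n*b + 1 + t) := by
      rw [hM (4*n*(b+1)), hM (4*n*b)]
      rw [show 4*n*(b+1) + 1 = (4*n*b + 1) + 4*n by ring, Finset.prod_range_add]
    have hge : μ (4*n*b+1) ^ (4*n) ≤ ∏ t ∈ Finset.range (4*n), μ (4*n*b+1+t) := by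
      calc μ (4*n*b+1) ^ (4*n) = ∏ _t ∈ Finset.range (4*n), μ (4*n*b+1) := by
            rw [Finset.prod_const, Finset.card_range]
        _ ≤ _ := Finset.prod_le_prod (fun _ _ => (hμpos _).le) (fun t _ => hμmono (by omega))
    have hratio_eq : N (b+1) / N b = (M (4*n*(b+1)) / M (4*n*b)) ^ (1 / (4*(n:ℝ))) := by
      rw [hNdef]
      rw [Real.div_rpow (hMpos _).le (hMpos _).le]
    rw [hratio_eq, hprod, mul_div_cancel_left₀ _ (hMpos _).ne']
    calc μ (4*n*b+1) = (μ (4*n*b+1) ^ (4*n)) ^ (1 / (4*(n:ℝ))) := by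
          rw [← Real.rpow_natCast _ (4*n), ← Real.rpow_mul (hμpos _).le]
          rw [show ((4*n : ℕ) : ℝ) * (1 / (4*(n:ℝ))) = 1 by push_cast; field_simp]
          rw [Real.rpow_one]
      _ ≤ _ := Real.rpow_le_rpow (pow_nonneg (hμpos _).le _) hge (by positivity)
  -- termwise bound for the target tail sum
  have hterm : ∀ j, 1 ≤ j → ∀ k : ℕ,
      1 / (N (j+k) / N (j+k-1)) ≤ 1 / μ (4*n*(j+k-1) + 1) := by
    intro j hj k
    obtain ⟨j', rfl⟩ : ∃ j', j = j' + 1 := ⟨j - 1, by omega⟩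
    rw [show j'+1+k = (j'+k)+1 by omega, show (j'+k)+1-1 = j'+k from rfl]
    exact one_div_le_one_div_of_le (hμpos _) (hNratio (j'+k))
  have hg_summable : ∀ j, 1 ≤ j → Summable (fun k => 1 / μ (4*n*(j+k-1)+1)) := by
    intro j hj
    apply Summable.of_nonneg_of_le (fun k => div_nonneg zero_le_one (hμpos _).le)
      (fun k => ?_) hnqa
    apply one_div_le_one_div_of_le (hμpos _) (hμmono ?_)
    have h1 : k ≤ 4*n*k := Nat.le_mul_of_pos_left k (by omega)
    have h2 : 4*n*k ≤ 4*n*(j+k-1) := Nat.mul_le_mul_left _ (by omega)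
    omega
  have hS_summable : ∀ j, 1 ≤ j → Summable (fun k => 1 / (N (j+k) / N (j+k-1))) := by
    intro j hj
    apply Summable.of_nonneg_of_le
      (fun k => div_nonneg zero_le_one (div_nonneg (hNpos _).le (hNpos _).le))
      (hterm j hj) (hg_summable j hj)
  have hSnonneg : ∀ j : ℕ, (0:ℝ) ≤ ∑' k, 1 / (N (j+k) / N (j+k-1)) := by
    intro j
    exact tsum_nonneg (fun k => div_nonneg zero_le_one (div_nonneg (hNpos _).le (hNpos _).le))
  set K : ℝ := max 1 ((∑' k, 1 / (N (1+k) / N (1+k-1))) / ∑' k, 1 / μ (n + k)) with hKdef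
  have hK1 : (1:ℝ) ≤ K := le_max_left _ _
  have hSK : ∀ j, 1 ≤ j →
      (∑' k, 1 / (N (j+k) / N (j+k-1))) ≤ K * ∑' k, 1 / μ (n*j + k) := by
    intro j hj
    rcases eq_or_lt_of_le hj with h1 | h2
    · -- j = 1
      subst h1
      simp only [mul_one]
      have heq : (∑' k, 1 / (N (1+k) / N (1+k-1)))
          = ((∑' k, 1 / (N (1+k) / N (1+k-1))) / ∑' k, 1 / μ (n + k)) * ∑' k, 1 / μ (n + k) :=
        (div_mul_cancel₀ _ (hTpos n).ne').symm
      rw [heq]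
      exact mul_le_mul_of_nonneg_right (le_max_right _ _) (hTpos n).le
    · -- j ≥ 2
      have hle : ∀ k : ℕ, 1 / (N (j+k) / N (j+k-1)) ≤ 1 / μ (n*j + k) := by
        intro k
        refine (hterm j hj k).trans ?_
        apply one_div_le_one_div_of_le (hμpos _) (hμmono ?_)
        have h1 : n*j ≤ n*(4*(j-1)) := Nat.mul_le_mul_left _ (by omega)
        have h2 : n*(4*(j-1)) + 4*n*k = 4*n*(j+k-1) := by
          have h4 : 4*(j-1) + 4*k = 4*(j+k-1) := by omega
          calc n*(4*(j-1)) + 4*n*k = n*(4*(j-1) + 4*k) := by ring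
            _ = n*(4*(j+k-1)) := by rw [h4]
            _ = 4*n*(j+k-1) := by ring
        have h3 : k ≤ 4*n*k := Nat.le_mul_of_pos_left k (by omega)
        omega
      calc (∑' k, 1 / (N (j+k) / N (j+k-1))) ≤ ∑' k, 1 / μ (n*j + k) :=
            Summable.tsum_le_tsum hle (hS_summable j hj) (hTsummable _)
        _ ≤ K * ∑' k, 1 / μ (n*j + k) := le_mul_of_one_le_left (hTpos _).le hK1
  -- N i dominates M (n*i) ^ (1/n)
  have hNi : ∀ i : ℕ, M (n*i) ^ (1/(n:ℝ)) ≤ N i := by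
    intro i
    have h4 := hM4 (n*i)
    have hNi_eq : N i = M (4*(n*i)) ^ (1 / (4*(n:ℝ))) := by
      rw [hNdef, show 4*(n*i) = 4*n*i by ring]
    rw [hNi_eq]
    calc M (n*i) ^ (1/(n:ℝ)) = (M (n*i) ^ (4:ℕ)) ^ (1 / (4*(n:ℝ))) := by
          rw [← Real.rpow_natCast _ 4, ← Real.rpow_mul (hMpos _).le]
          congr 1
          push_cast
          field_simp
      _ ≤ M (4*(n*i)) ^ (1 / (4*(n:ℝ))) := Real.rpow_le_rpow (by positivity) h4 (by positivity)
  refine ⟨s ^ n, one_le_pow₀ hs, C * n * K, ?_⟩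
  intro j hj i hij
  simp only []
  have hjpos : (0:ℝ) < j := by exact_mod_cast Nat.pos_of_ne_zero (by omega)
  have hij' : (i:ℝ) < (j:ℝ) := by exact_mod_cast hij
  have hr : (0:ℝ) < (j:ℝ) - (i:ℝ) := by linarith
  have hnj1 : 1 ≤ n*j := Nat.one_le_iff_ne_zero.mpr (by positivity)
  have hninj : n*i < n*j := (Nat.mul_lt_mul_left (show 0 < n by omega)).mpr hij
  -- Q' ≤ Q
  have hX_le : M' (n*j) ^ (1/(n:ℝ)) / ((s^n)^j * N i)
      ≤ (M' (n*j) / (s^(n*j) * M (n*i))) ^ ((1:ℝ)/n) := by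
    rw [Real.div_rpow (hM'pos _).le (mul_pos (pow_pos hspos _) (hMpos _)).le,
      Real.mul_rpow (pow_pos hspos _).le (hMpos _).le]
    apply div_le_div_of_nonneg_left (Real.rpow_nonneg (hM'pos _).le _)
      (mul_pos (Real.rpow_pos_of_pos (pow_pos hspos _) _) (Real.rpow_pos_of_pos (hMpos _) _))
    have hd1 : (s^(n*j) : ℝ) ^ ((1:ℝ)/n) ≤ (s^n)^j := by
      calc (s^(n*j) : ℝ) ^ ((1:ℝ)/n) ≤ (s^(n*j) : ℝ) ^ (1:ℝ) :=
            Real.rpow_le_rpow_of_exponent_le (one_le_pow₀ hs)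
              (by rw [div_le_one hn0]; exact_mod_cast hn)
        _ = s^(n*j) := Real.rpow_one _
        _ = (s^n)^j := pow_mul s n j
    exact mul_le_mul hd1 (by simpa [one_div] using hNi i)
      (Real.rpow_nonneg (hMpos _).le _) (by positivity)
  have hQQ : (M' (n*j) ^ (1/(n:ℝ)) / ((s^n)^j * N i)) ^ (1 / ((j:ℝ) - (i:ℝ)))
      ≤ (M' (n*j) / (s^(n*j) * M (n*i))) ^ (1 / (((n*j : ℕ):ℝ) - ((n*i : ℕ):ℝ))) := by
    calc (M' (n*j) ^ (1/(n:ℝ)) / ((s^n)^j * N i)) ^ (1 / ((j:ℝ) - (i:ℝ)))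
        ≤ ((M' (n*j) / (s^(n*j) * M (n*i))) ^ ((1:ℝ)/n)) ^ (1 / ((j:ℝ) - (i:ℝ))) :=
          Real.rpow_le_rpow (div_nonneg (Real.rpow_nonneg (hM'pos _).le _)
            (mul_pos (pow_pos (pow_pos hspos n) j) (hNpos i)).le) hX_le (by positivity)
      _ = (M' (n*j) / (s^(n*j) * M (n*i))) ^ (((1:ℝ)/n) * (1 / ((j:ℝ) - (i:ℝ)))) := by
          rw [← Real.rpow_mul (div_nonneg (hM'pos _).le
            (mul_pos (pow_pos hspos _) (hMpos _)).le)]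
      _ = (M' (n*j) / (s^(n*j) * M (n*i))) ^ (1 / (((n*j : ℕ):ℝ) - ((n*i : ℕ):ℝ))) := by
          congr 1
          push_cast
          rw [div_mul_div_comm, one_mul, ← mul_sub]
  have hmain := hC2 (n*j) hnj1 (n*i) hninj
  have hSj := hSK j hj
  calc (M' (n*j) ^ (1/(n:ℝ)) / ((s^n)^j * N i)) ^ (1 / ((j:ℝ) - (i:ℝ))) / (j:ℝ) *
        (∑' k, 1 / (N (j+k) / N (j+k-1)))
      ≤ (M' (n*j) / (s^(n*j) * M (n*i))) ^ (1 / (((n*j : ℕ):ℝ) - ((n*i : ℕ):ℝ))) / (j:ℝ) *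
        (K * ∑' k, 1 / μ (n*j + k)) := by
        apply mul_le_mul ((div_le_div_iff_of_pos_right hjpos).mpr hQQ) hSj (hSnonneg j)
        apply div_nonneg (Real.rpow_nonneg ?_ _) hjpos.le
        exact div_nonneg (hM'pos _).le (mul_pos (pow_pos hspos _) (hMpos _)).le
    _ = ((M' (n*j) / (s^(n*j) * M (n*i))) ^ (1 / (((n*j : ℕ):ℝ) - ((n*i : ℕ):ℝ))) *
        (∑' k, 1 / μ (n*j + k))) * K / (j:ℝ) := by ring
    _ ≤ (C * ((n*j : ℕ):ℝ)) * K / (j:ℝ) := by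
        have hK0 : (0:ℝ) ≤ K := le_trans zero_le_one hK1
        apply div_le_div_of_nonneg_right ?_ hjpos.le
        exact mul_le_mul_of_nonneg_right hmain hK0
    _ = C * n * K := by
        push_cast
        field_simp
end

section
/- Let M be a non-quasianalytic weight sequence. Define τ_k := k/μ_k + Σ_{ℓ≥k} 1/μ_ℓ and σ_k := τ_1 · k/τ_k for k ≥ 1, σ_0 := 1, S_k := σ_0 σ_1 ⋯ σ_k. Then σ_k/k is increasing in k (i.e., S is strongly log-convex), σ_k ≤ τ_1 μ_k for all k ≥ 1, and σ_k → ∞. -/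
open MeasureTheory Set Filter

theorem stmt_12 (μ M : ℕ → ℝ) (hμ0 : μ 0 = 1) (hμ1 : 1 ≤ μ 1)
    (hμmono : Monotone μ) (hμtop : Tendsto μ atTop atTop)
    (hM : ∀ k, M k = ∏ i ∈ Finset.range (k + 1), μ i)
    (hnqa : Summable (fun k => 1 / μ k))
    (τ : ℕ → ℝ)
    (hτ : ∀ k, 1 ≤ k → τ k = (k : ℝ) / μ k + ∑' ℓ : ℕ, 1 / μ (k + ℓ))
    (σ : ℕ → ℝ) (hσ0 : σ 0 = 1)
    (hσ : ∀ k, 1 ≤ k → σ k = τ 1 * (k : ℝ) / τ k)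
    (S : ℕ → ℝ)
    (hS : ∀ k, S k = ∏ i ∈ Finset.range (k + 1), σ i) :
    (∀ k, 1 ≤ k → σ k / (k : ℝ) ≤ σ (k + 1) / ((k : ℝ) + 1)) ∧
      (∀ k, 1 ≤ k → σ k ≤ τ 1 * μ k) ∧
      Tendsto σ atTop atTop := by
  have hμpos : ∀ k, 0 < μ k := by
    intro k
    have := hμmono (Nat.zero_le k)
    rw [hμ0] at this
    linarith
  have hsum : ∀ k : ℕ, Summable (fun ℓ : ℕ => 1 / μ (k + ℓ)) := by
    intro k
    have := (summable_nat_add_iff k).mpr hnqa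
    simpa [add_comm] using this
  have hT : ∀ k : ℕ, 0 ≤ ∑' ℓ : ℕ, 1 / μ (k + ℓ) := by
    intro k
    exact tsum_nonneg fun ℓ => div_nonneg zero_le_one (hμpos _).le
  have hτpos : ∀ k, 1 ≤ k → 0 < τ k := by
    intro k hk
    rw [hτ k hk]
    exact add_pos_of_pos_of_nonneg
      (div_pos (by exact_mod_cast hk) (hμpos k)) (hT k)
  have hτ1pos : 0 < τ 1 := hτpos 1 le_rfl
  have hτdec : ∀ k, 1 ≤ k → τ (k + 1) ≤ τ k := by
    intro k hk
    rw [hτ k hk, hτ (k + 1) (by omega)]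
    have hsplit : (∑' ℓ : ℕ, 1 / μ (k + ℓ))
        = 1 / μ k + ∑' ℓ : ℕ, 1 / μ (k + 1 + ℓ) := by
      rw [Summable.tsum_eq_zero_add (hsum k)]
      simp only [Nat.add_zero]
      congr 1
      exact tsum_congr fun ℓ => by rw [show k + (ℓ + 1) = k + 1 + ℓ from by omega]
    rw [hsplit]
    have h1 : ((k : ℝ) + 1) / μ (k + 1) ≤ ((k : ℝ) + 1) / μ k := by
      gcongr
      · exact hμpos k
      · exact hμmono (Nat.le_succ k)
    have h2 : (k : ℝ) / μ k + 1 / μ k = ((k : ℝ) + 1) / μ k := by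
      field_simp
    push_cast
    linarith
  have hτanti : ∀ m n, 1 ≤ m → m ≤ n → τ n ≤ τ m := by
    intro m n hm hmn
    induction n with
    | zero => omega
    | succ n ih =>
      rcases Nat.lt_or_ge m (n + 1) with h | h
      · exact le_trans (hτdec n (by omega)) (ih (by omega))
      · have : m = n + 1 := by omega
        rw [this]
  have hdivk : ∀ k : ℕ, 1 ≤ k → σ k / (k : ℝ) = τ 1 / τ k := by
    intro k hk
    rw [hσ k hk]
    have hk0 : (k : ℝ) ≠ 0 := by positivity
    have hτk0 : τ k ≠ 0 := ne_of_gt (hτpos k hk)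
    field_simp
  have hlow : ∀ k : ℕ, 1 ≤ k → (k : ℝ) ≤ σ k := by
    intro k hk
    rw [hσ k hk, mul_div_assoc]
    have h1 : (k : ℝ) / τ 1 ≤ (k : ℝ) / τ k := by
      gcongr
      · exact hτpos k hk
      · exact hτanti 1 k le_rfl hk
    calc (k : ℝ) = τ 1 * ((k : ℝ) / τ 1) := by field_simp
      _ ≤ τ 1 * ((k : ℝ) / τ k) := mul_le_mul_of_nonneg_left h1 hτ1pos.le
  refine ⟨?_, ?_, ?_⟩
  · intro k hk
    have e1 := hdivk k hk
    have e2 := hdivk (k + 1) (by omega)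
    push_cast at e2
    rw [e1, e2]
    gcongr
    · exact hτpos (k + 1) (by omega)
    · exact hτdec k hk
  · intro k hk
    rw [hσ k hk, mul_div_assoc]
    have hτk := hτpos k hk
    have hμk := hμpos k
    have hge : (k : ℝ) / μ k ≤ τ k := by
      rw [hτ k hk]; linarith [hT k]
    have h1 : (k : ℝ) / τ k ≤ μ k := by
      rw [div_le_iff₀ hτk]
      calc (k : ℝ) = μ k * ((k : ℝ) / μ k) := by field_simp
        _ ≤ μ k * τ k := mul_le_mul_of_nonneg_left hge hμk.le
    exact mul_le_mul_of_nonneg_left h1 hτ1pos.le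
  · refine tendsto_atTop_mono' atTop ?_ tendsto_natCast_atTop_atTop
    filter_upwards [eventually_ge_atTop 1] with k hk using hlow k hk
end

section
/- Let M be a non-quasianalytic weight sequence. Define L_0 := 1 and L_k := min_{0 ≤ j < k} ( (k / Σ_{ℓ≥k} μ_ℓ^{-1})^{k−j} M_j ) for k ≥ 1. If M' is a positive sequence with M' ≺_{SV} M (there exists s ≥ 1 with sup_{j≥1} (1/j)·sup_{0≤i<j}(M'_j/(s^j M_i))^{1/(j−i)}·Σ_{k≥j} 1/μ_k < ∞), then sup_{k≥1} (M'_k/L_k)^{1/k} < ∞. -/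
open MeasureTheory Set Filter

theorem stmt_14 (μ M : ℕ → ℝ) (hμ0 : μ 0 = 1) (hμ1 : 1 ≤ μ 1)
    (hμmono : Monotone μ) (hμtop : Tendsto μ atTop atTop)
    (hM : ∀ k, M k = ∏ i ∈ Finset.range (k + 1), μ i)
    (hnqa : Summable (fun k => 1 / μ k))
    (L : ℕ → ℝ) (hL0 : L 0 = 1)
    (hL : ∀ k : ℕ, 1 ≤ k →
      IsLeast {x : ℝ | ∃ j : ℕ, j < k ∧
        x = ((k : ℝ) / ∑' ℓ : ℕ, 1 / μ (k + ℓ)) ^ (k - j) * M j} (L k))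
    (M' : ℕ → ℝ) (hM'pos : ∀ k, 0 < M' k)
    (hSV : ∃ s : ℝ, 1 ≤ s ∧ ∃ C : ℝ, ∀ j, 1 ≤ j → ∀ i, i < j →
      (M' j / (s ^ j * M i)) ^ (1 / ((j : ℝ) - (i : ℝ))) / (j : ℝ) *
        (∑' k : ℕ, 1 / μ (j + k)) ≤ C) :
    ∃ C : ℝ, ∀ k, 1 ≤ k → (M' k / L k) ^ (1 / (k : ℝ)) ≤ C := by
  obtain ⟨s, hs, C0, hC0⟩ := hSV
  have hμpos : ∀ k, 0 < μ k := fun k => by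
    have : μ 0 ≤ μ k := hμmono (Nat.zero_le k)
    linarith [hμ0 ▸ this]
  have hMpos : ∀ k, 0 < M k := fun k => by
    rw [hM]; exact Finset.prod_pos fun i _ => hμpos i
  set C' : ℝ := max C0 1 with hC'def
  have hC'1 : (1:ℝ) ≤ C' := le_max_right _ _
  refine ⟨s * C', fun k hk => ?_⟩
  have hTsum : Summable (fun ℓ => 1 / μ (k + ℓ)) :=
    hnqa.comp_injective (add_right_injective k)
  have hTpos : 0 < ∑' ℓ : ℕ, 1 / μ (k + ℓ) :=
    Summable.tsum_pos hTsum (fun ℓ => le_of_lt (one_div_pos.mpr (hμpos _)))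
      0 (one_div_pos.mpr (hμpos _))
  set T : ℝ := ∑' ℓ : ℕ, 1 / μ (k + ℓ) with hTdef
  obtain ⟨⟨j, hjk, hLkeq⟩, _⟩ := hL k hk
  rw [← hTdef] at hLkeq
  have hkpos : (0:ℝ) < k := by exact_mod_cast hk
  have hspos : (0:ℝ) < s := lt_of_lt_of_le one_pos hs
  have hMjpos := hMpos j
  have hLkpos : 0 < L k := by
    rw [hLkeq]
    exact mul_pos (pow_pos (div_pos hkpos hTpos) _) hMjpos
  have hkey := hC0 k hk j hjk
  rw [← hTdef] at hkey
  set a : ℝ := M' k / (s ^ k * M j) with hadef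
  have hapos : 0 < a := by
    have := hM'pos k; positivity
  set e : ℝ := (k:ℝ) - (j:ℝ) with hedef
  have hepos : 0 < e := by
    have : (j:ℝ) < k := by exact_mod_cast hjk
    simp only [hedef]; linarith
  have h1 : a ^ (1/e) ≤ C' * ((k:ℝ) / T) := by
    have h2 : a ^ (1/e) ≤ C0 * ((k:ℝ) / T) := by
      rw [div_mul_eq_mul_div, div_le_iff₀ hkpos] at hkey
      rw [← mul_div_assoc, le_div_iff₀ hTpos]
      exact hkey
    have h4 : C0 * ((k:ℝ)/T) ≤ C' * ((k:ℝ)/T) :=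
      mul_le_mul_of_nonneg_right (le_max_left _ _) (div_pos hkpos hTpos).le
    linarith
  have h3 : a ≤ (C' * ((k:ℝ)/T)) ^ e := by
    have hmono := Real.rpow_le_rpow (Real.rpow_nonneg hapos.le _) h1 hepos.le
    have hid : (a ^ (1/e)) ^ e = a := by
      rw [← Real.rpow_mul hapos.le, one_div, inv_mul_cancel₀ hepos.ne',
        Real.rpow_one]
    rwa [hid] at hmono
  have hkTnn : (0:ℝ) ≤ (k:ℝ)/T := (div_pos hkpos hTpos).le
  have hsplit : (C' * ((k:ℝ)/T)) ^ e = C' ^ e * ((k:ℝ)/T) ^ e :=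
    Real.mul_rpow (le_trans zero_le_one hC'1) hkTnn
  have hCe : C' ^ e ≤ C' ^ (k : ℕ) := by
    rw [← Real.rpow_natCast C' k]
    apply Real.rpow_le_rpow_of_exponent_le hC'1
    have : (0:ℝ) ≤ (j:ℝ) := Nat.cast_nonneg j
    simp only [hedef]; linarith
  have hkT : ((k:ℝ)/T) ^ e = ((k:ℝ)/T) ^ (k - j : ℕ) := by
    rw [← Real.rpow_natCast ((k:ℝ)/T) (k - j)]
    congr 1
    rw [hedef, Nat.cast_sub hjk.le]
  have h5 : a ≤ C' ^ (k:ℕ) * ((k:ℝ)/T) ^ (k - j : ℕ) := by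
    calc a ≤ (C' * ((k:ℝ)/T)) ^ e := h3
      _ = C' ^ e * ((k:ℝ)/T) ^ e := hsplit
      _ ≤ C' ^ (k:ℕ) * ((k:ℝ)/T) ^ (k - j : ℕ) := by
          rw [hkT]
          exact mul_le_mul_of_nonneg_right hCe (pow_nonneg hkTnn _)
  have hM'le : M' k ≤ (s * C') ^ k * L k := by
    have heq : M' k = a * (s ^ k * M j) := by
      rw [hadef, div_mul_cancel₀]
      positivity
    rw [heq, hLkeq, mul_pow]
    calc a * (s ^ k * M j)
        ≤ (C' ^ k * ((k:ℝ)/T) ^ (k - j)) * (s ^ k * M j) := by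
          apply mul_le_mul_of_nonneg_right h5
          positivity
      _ = s ^ k * C' ^ k * (((k:ℝ)/T) ^ (k - j) * M j) := by ring
  have hdivle : M' k / L k ≤ (s * C') ^ k :=
    (div_le_iff₀ hLkpos).mpr (by linarith [hM'le])
  have hfin := Real.rpow_le_rpow (div_nonneg (hM'pos k).le hLkpos.le) hdivle
    (by positivity : (0:ℝ) ≤ 1 / (k:ℝ))
  calc (M' k / L k) ^ (1/(k:ℝ)) ≤ ((s * C') ^ k) ^ (1/(k:ℝ)) := hfin
    _ = s * C' := by
        rw [← Real.rpow_natCast (s * C') k, ← Real.rpow_mul (by positivity),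
          mul_one_div, div_self (ne_of_gt hkpos), Real.rpow_one]
end

section
/- Let ω be a non-quasianalytic weight function (additionally ω(2t) = O(ω(t))) with associated weight matrix M^{(α)}_k = exp((1/α)φ*_ω(αk)), α > 0. Suppose the matrix has R-moderate growth in the sense: ∀α ∃β ∃H ≥ 1 ∀t: 2 ω_{M^{(β)}}(t) ≤ ω_{M^{(α)}}(Ht) + H. Then the derived functions κ_α(t) := ∫₁^∞ ω̃_α(ts)/s² ds, where ω̃_α(t) := ω_{M^{(α)}}(t) + log(1+t²), satisfy: ∀α ∃β ∃H ≥ 1 ∀t ≥ 0: 2 κ_β(t) ≤ κ_α(Ht) + H. -/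
/-!
Iterating R-moderate growth once more gives `4 ω_β(t) ≤ ω_α(H t) + 3 H`. The `k = 4` term of the
supremum defining `ω_α` shows `log (1 + t²) ≤ ω_α(t) / 2 + C`, so half of the gained factor `2`
absorbs the extra logarithm: `2 ω̃_β(t) ≤ ω̃_α(H' t) + H'` for `H'` large, `ω_α` being increasing.
Integrating against `s⁻² ds` on `(1, ∞)`, a measure of total mass `1`, gives the claim. The
integrals are finite because `ω_α ≤ (ω + ω(1)) / α` (test the Young conjugate `φ` at `y = log t`)
and `ω` is non-quasianalytic.
-/

open MeasureTheory Set Filter Asymptotics Real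

def RModerateGrowth (w : ℝ → ℝ → ℝ) : Prop :=
  ∀ α, 0 < α → ∃ β, 0 < β ∧ ∃ H : ℝ, 1 ≤ H ∧ ∀ t, 0 ≤ t → 2 * w β t ≤ w α (H * t) + H

theorem RModerateGrowth.four_mul_le {w : ℝ → ℝ → ℝ} (hw : RModerateGrowth w) {α : ℝ}
    (hα : 0 < α) :
    ∃ β, 0 < β ∧ ∃ H : ℝ, 1 ≤ H ∧ ∀ t, 0 ≤ t → 4 * w β t ≤ w α (H * t) + 3 * H := by
  obtain ⟨β₁, hβ₁, H₁, hH₁, h₁⟩ := hw α hα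
  obtain ⟨β, hβ, H₂, hH₂, h₂⟩ := hw β₁ hβ₁
  refine ⟨β, hβ, H₁ * H₂, one_le_mul_of_one_le_of_one_le hH₁ hH₂, fun t ht => ?_⟩
  have := h₁ (H₂ * t) (by positivity)
  have := h₂ t ht
  rw [mul_assoc]
  nlinarith

section YoungConjugate

variable {ω φ : ℝ → ℝ}

theorem bddAbove_range_mul_sub_comp_exp (hω : ∀ t, 0 ≤ t → 0 ≤ ω t)
    (hlog : Real.log =o[atTop] ω) {s : ℝ} (hs : 0 ≤ s) :
    BddAbove (range fun y : Ici (0 : ℝ) => s * y - ω (exp y)) := by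
  have hlin : ∀ᶠ y in atTop, (s + 1) * y ≤ ω (exp y) := by
    have hs1 : 0 < s + 1 := by linarith
    filter_upwards [tendsto_exp_atTop.eventually (hlog.bound (inv_pos.2 hs1)),
      eventually_ge_atTop 0] with y hy hy0
    rwa [log_exp, norm_of_nonneg hy0, norm_of_nonneg (hω _ (exp_pos y).le), ← div_eq_inv_mul,
      le_div_iff₀ hs1, mul_comm] at hy
  obtain ⟨Y, hY⟩ := eventually_atTop.1 hlin
  refine ⟨s * max Y 0, ?_⟩
  rintro _ ⟨⟨y, hy : 0 ≤ y⟩, rfl⟩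
  have hωy := hω _ (exp_pos y).le
  have hsY := mul_nonneg hs (le_max_right Y 0)
  rcases le_total y Y with h | h
  · nlinarith [mul_le_mul_of_nonneg_left (h.trans (le_max_left Y 0)) hs]
  · nlinarith [hY y h]

theorem mul_sub_le_of_eq_iSup (hω : ∀ t, 0 ≤ t → 0 ≤ ω t) (hlog : Real.log =o[atTop] ω)
    (hφ : ∀ s, 0 ≤ s → φ s = ⨆ y : Ici (0 : ℝ), (s * y - ω (exp y))) {s y : ℝ} (hs : 0 ≤ s)
    (hy : 0 ≤ y) : s * y - ω (exp y) ≤ φ s := by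
  rw [hφ s hs]
  exact le_ciSup (f := fun y : Ici (0 : ℝ) => s * y - ω (exp y))
    (bddAbove_range_mul_sub_comp_exp hω hlog hs) ⟨y, hy⟩

theorem nonpos_of_eq_iSup (hω : ∀ t, 0 ≤ t → 0 ≤ ω t)
    (hφ : ∀ s, 0 ≤ s → φ s = ⨆ y : Ici (0 : ℝ), (s * y - ω (exp y))) : φ 0 ≤ 0 := by
  rw [hφ 0 le_rfl]
  exact ciSup_le fun y => by simpa using hω _ (exp_pos y).le

theorem log_pow_div_exp_le (hω : ∀ t, 0 ≤ t → 0 ≤ ω t) (hlog : Real.log =o[atTop] ω)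
    (hφ : ∀ s, 0 ≤ s → φ s = ⨆ y : Ici (0 : ℝ), (s * y - ω (exp y))) {γ t : ℝ} (hγ : 0 < γ)
    (ht : 0 < t) (k : ℕ) :
    log (t ^ k / exp (1 / γ * φ (γ * k))) ≤ γ⁻¹ * ω t + γ⁻¹ * ω 1 := by
  set y := max (log t) 0
  have hyoung : γ * k * y - ω (exp y) ≤ φ (γ * k) :=
    mul_sub_le_of_eq_iSup hω hlog hφ (by positivity) (le_max_right _ _)
  have hωy : ω (exp y) ≤ ω t + ω 1 := by
    rcases le_total (log t) 0 with h | h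
    · rw [show y = 0 from max_eq_right h, exp_zero]; linarith [hω t ht.le]
    · rw [show y = log t from max_eq_left h, exp_log ht]; linarith [hω 1 zero_le_one]
  have hky : γ * k * log t ≤ γ * k * y := by gcongr; exact le_max_left _ _
  rw [log_div (pow_ne_zero k ht.ne') (exp_ne_zero _), log_pow, log_exp, ← mul_add]
  calc k * log t - 1 / γ * φ (γ * k) = γ⁻¹ * (γ * k * log t - φ (γ * k)) := by field_simp
    _ ≤ γ⁻¹ * (ω t + ω 1) := by gcongr; linarith

end YoungConjugate

section AssociatedWeight

variable {M : ℕ → ℝ} {w B : ℝ → ℝ}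

theorem log_pow_div_le_of_eq_iSup_log (hw : ∀ t, 0 < t → w t = ⨆ k : ℕ, log (t ^ k / M k))
    (hB : ∀ t, 0 < t → ∀ k, log (t ^ k / M k) ≤ B t) {t : ℝ} (ht : 0 < t) (k : ℕ) :
    log (t ^ k / M k) ≤ w t := by
  rw [hw t ht]
  exact le_ciSup ⟨B t, forall_mem_range.2 (hB t ht)⟩ k

theorem le_of_eq_iSup_log (hw : ∀ t, 0 < t → w t = ⨆ k : ℕ, log (t ^ k / M k))
    (hB : ∀ t, 0 < t → ∀ k, log (t ^ k / M k) ≤ B t) {t : ℝ} (ht : 0 < t) : w t ≤ B t := by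
  rw [hw t ht]
  exact ciSup_le (hB t ht)

theorem nonneg_of_eq_iSup_log (hw0 : w 0 = 0)
    (hw : ∀ t, 0 < t → w t = ⨆ k : ℕ, log (t ^ k / M k))
    (hB : ∀ t, 0 < t → ∀ k, log (t ^ k / M k) ≤ B t) (hM : ∀ k, 0 < M k) (hM1 : M 0 ≤ 1)
    {t : ℝ} (ht : 0 ≤ t) : 0 ≤ w t := by
  rcases ht.eq_or_lt with rfl | ht
  · exact hw0.ge
  calc 0 ≤ log (t ^ 0 / M 0) := by
        rw [pow_zero, one_div, log_inv, neg_nonneg]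
        exact log_nonpos (hM 0).le hM1
    _ ≤ w t := log_pow_div_le_of_eq_iSup_log hw hB ht 0

theorem monotoneOn_of_eq_iSup_log (hw0 : w 0 = 0)
    (hw : ∀ t, 0 < t → w t = ⨆ k : ℕ, log (t ^ k / M k))
    (hB : ∀ t, 0 < t → ∀ k, log (t ^ k / M k) ≤ B t) (hM : ∀ k, 0 < M k) (hM1 : M 0 ≤ 1) :
    MonotoneOn w (Ici 0) := by
  intro s (hs : 0 ≤ s) t _ hst
  rcases hs.eq_or_lt with rfl | hs
  · rw [hw0]
    exact nonneg_of_eq_iSup_log hw0 hw hB hM hM1 hst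
  have ht := hs.trans_le hst
  rw [hw s hs, hw t ht]
  refine ciSup_mono ⟨B t, forall_mem_range.2 (hB t ht)⟩ fun k => ?_
  have := hM k
  exact log_le_log (by positivity) (by gcongr)

theorem exists_log_one_add_sq_le_of_eq_iSup_log (hw0 : w 0 = 0)
    (hw : ∀ t, 0 < t → w t = ⨆ k : ℕ, log (t ^ k / M k))
    (hB : ∀ t, 0 < t → ∀ k, log (t ^ k / M k) ≤ B t) (hM : ∀ k, 0 < M k) (hM1 : M 0 ≤ 1) :
    ∃ C, ∀ u, 0 ≤ u → log (1 + u ^ 2) ≤ w u / 2 + C := by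
  refine ⟨log 2 + |log (M 4)| / 2, fun u hu => ?_⟩
  have habs := le_abs_self (log (M 4))
  rcases le_or_gt u 1 with hu1 | hu1
  · have : log (1 + u ^ 2) ≤ log 2 := log_le_log (by positivity) (by nlinarith)
    linarith [nonneg_of_eq_iSup_log hw0 hw hB hM hM1 hu, abs_nonneg (log (M 4))]
  -- the `k = 4` term gives `w u ≥ 2 log (u²) - log (M 4)`
  have h4 := log_pow_div_le_of_eq_iSup_log hw hB (t := u) (by linarith) 4
  rw [log_div (by positivity) (hM 4).ne', log_pow] at h4
  have : log (1 + u ^ 2) ≤ log 2 + 2 * log u :=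
    calc log (1 + u ^ 2) ≤ log (2 * u ^ 2) := log_le_log (by positivity) (by nlinarith)
      _ = log 2 + 2 * log u := by rw [log_mul two_ne_zero (by positivity), log_pow]; norm_num
  push_cast at h4
  linarith

end AssociatedWeight

theorem monotoneOn_log_one_add_sq : MonotoneOn (fun u : ℝ => log (1 + u ^ 2)) (Ici 0) :=
  fun u (hu : 0 ≤ u) _ _ huv => log_le_log (by positivity) (by gcongr)

section KappaIntegral

theorem eqOn_const_mul_rpow_neg_two (c : ℝ) :
    EqOn (fun s : ℝ => c * s ^ (-2 : ℝ)) (fun s => c / s ^ 2) (Ioi 0) := fun s (hs : 0 < s) => by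
  simp [rpow_neg hs.le, div_eq_mul_inv]

theorem integrableOn_Ioi_one_const_div_sq (c : ℝ) :
    IntegrableOn (fun s : ℝ => c / s ^ 2) (Ioi 1) :=
  IntegrableOn.congr_fun
    ((integrableOn_Ioi_rpow_of_lt (by norm_num : (-2 : ℝ) < -1) one_pos).const_mul c)
    ((eqOn_const_mul_rpow_neg_two c).mono (Ioi_subset_Ioi zero_le_one)) measurableSet_Ioi

theorem integral_Ioi_one_const_div_sq (c : ℝ) : ∫ s in Ioi (1 : ℝ), c / s ^ 2 = c := by
  rw [← setIntegral_congr_fun measurableSet_Ioi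
    ((eqOn_const_mul_rpow_neg_two c).mono (Ioi_subset_Ioi zero_le_one)),
    integral_const_mul, integral_Ioi_rpow_of_lt (by norm_num) one_pos]
  norm_num

theorem integrableOn_comp_mul_div_sq {ω f : ℝ → ℝ} {a b t : ℝ} (hω : ∀ u, 0 ≤ u → 0 ≤ ω u)
    (hnqa : IntegrableOn (fun u => ω u / (1 + u ^ 2)) (Ici 0)) (hf : MonotoneOn f (Ici 0))
    (hf0 : ∀ u, 0 ≤ u → 0 ≤ f u) (ha : 0 ≤ a) (hfω : ∀ u, 0 < u → f u ≤ a * ω u + b)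
    (ht : 0 ≤ t) : IntegrableOn (fun s => f (t * s) / s ^ 2) (Ioi 1) := by
  rcases ht.eq_or_lt with rfl | ht
  · simpa using integrableOn_Ioi_one_const_div_sq (f 0)
  have hωt : IntegrableOn (fun s => ω (t * s) / (1 + (t * s) ^ 2)) (Ioi 1) :=
    (integrableOn_Ioi_comp_mul_left_iff (fun u => ω u / (1 + u ^ 2)) 1 ht).2
      (hnqa.mono_set (by rw [mul_one]; exact Ioi_subset_Ici ht.le))
  have hmeas : AEStronglyMeasurable (fun s => f (t * s) / s ^ 2) (volume.restrict (Ioi 1)) := by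
    refine (AEMeasurable.div (aemeasurable_restrict_of_monotoneOn measurableSet_Ioi ?_)
      (by fun_prop)).aestronglyMeasurable
    intro x (hx : 1 < x) y (hy : 1 < y) hxy
    exact hf (by positivity : 0 ≤ t * x) (by positivity : 0 ≤ t * y) (by gcongr)
  refine ((hωt.const_mul (a * (1 + t ^ 2))).add (integrableOn_Ioi_one_const_div_sq b)).mono'
    hmeas ?_
  filter_upwards [ae_restrict_mem measurableSet_Ioi] with s (hs : 1 < s)
  have hts : 0 < t * s := by positivity
  have hωts := hω _ hts.le
  have hdom : ω (t * s) / s ^ 2 ≤ (1 + t ^ 2) * (ω (t * s) / (1 + (t * s) ^ 2)) := by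
    rw [mul_div_assoc', div_le_div_iff₀ (by positivity) (by positivity)]
    have : 1 + (t * s) ^ 2 ≤ (1 + t ^ 2) * s ^ 2 := by nlinarith
    nlinarith
  rw [norm_of_nonneg (div_nonneg (hf0 _ hts.le) (sq_nonneg s))]
  calc f (t * s) / s ^ 2 ≤ (a * ω (t * s) + b) / s ^ 2 := by gcongr; exact hfω _ hts
    _ = a * (ω (t * s) / s ^ 2) + b / s ^ 2 := by ring
    _ ≤ a * ((1 + t ^ 2) * (ω (t * s) / (1 + (t * s) ^ 2))) + b / s ^ 2 := by gcongr
    _ = _ := by simp only [Pi.add_apply]; ring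

theorem integrableOn_add_log_div_sq_of_eq_iSup_log {M : ℕ → ℝ} {ω w : ℝ → ℝ} {a b t : ℝ}
    (hω : ∀ u, 0 ≤ u → 0 ≤ ω u) (hnqa : IntegrableOn (fun u => ω u / (1 + u ^ 2)) (Ici 0))
    (hw0 : w 0 = 0) (hw : ∀ t, 0 < t → w t = ⨆ k : ℕ, log (t ^ k / M k))
    (hB : ∀ t, 0 < t → ∀ k, log (t ^ k / M k) ≤ a * ω t + b) (hM : ∀ k, 0 < M k)
    (hM1 : M 0 ≤ 1) (ha : 0 ≤ a) (ht : 0 ≤ t) :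
    IntegrableOn (fun s => (w (t * s) + log (1 + (t * s) ^ 2)) / s ^ 2) (Ioi 1) := by
  obtain ⟨C, hC⟩ := exists_log_one_add_sq_le_of_eq_iSup_log hw0 hw hB hM hM1
  refine integrableOn_comp_mul_div_sq (f := fun u => w u + log (1 + u ^ 2))
    (a := 3 / 2 * a) (b := 3 / 2 * b + C) hω hnqa
    ((monotoneOn_of_eq_iSup_log hw0 hw hB hM hM1).add monotoneOn_log_one_add_sq)
    (fun u hu => add_nonneg (nonneg_of_eq_iSup_log hw0 hw hB hM hM1 hu)
      (log_nonneg (by nlinarith))) (by positivity) (fun u hu => ?_) ht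
  linarith [le_of_eq_iSup_log hw hB hu, hC u hu.le]

theorem mul_setIntegral_div_sq_le {f g : ℝ → ℝ} {c t H A : ℝ}
    (hf : IntegrableOn (fun s => f (t * s) / s ^ 2) (Ioi 1))
    (hg : IntegrableOn (fun s => g (H * t * s) / s ^ 2) (Ioi 1))
    (hfg : ∀ u, 0 ≤ u → c * f u ≤ g (H * u) + A) (ht : 0 ≤ t) :
    c * ∫ s in Ioi 1, f (t * s) / s ^ 2 ≤ (∫ s in Ioi 1, g (H * t * s) / s ^ 2) + A := by
  have hA := integrableOn_Ioi_one_const_div_sq A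
  calc c * ∫ s in Ioi 1, f (t * s) / s ^ 2 = ∫ s in Ioi 1, c * (f (t * s) / s ^ 2) :=
        (integral_const_mul c _).symm
    _ ≤ ∫ s in Ioi 1, (g (H * t * s) / s ^ 2 + A / s ^ 2) := by
        refine setIntegral_mono_on (hf.const_mul c) (hg.add hA) measurableSet_Ioi
          fun s (hs : 1 < s) => ?_
        rw [mul_div_assoc', ← add_div, mul_assoc H]
        gcongr
        exact hfg _ (by positivity)
    _ = (∫ s in Ioi 1, g (H * t * s) / s ^ 2) + A := by
        rw [integral_add hg hA, integral_Ioi_one_const_div_sq]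

end KappaIntegral

theorem two_mul_add_log_le {v w : ℝ → ℝ} {A C H H' u : ℝ} (hw : MonotoneOn w (Ici 0))
    (hlog : ∀ u, 0 ≤ u → log (1 + u ^ 2) ≤ w u / 2 + C)
    (hvw : ∀ u, 0 ≤ u → 4 * v u ≤ w (H * u) + A) (hH : 1 ≤ H) (hHH' : H ≤ H')
    (hAC : A / 2 + C ≤ H') (hu : 0 ≤ u) :
    2 * (v u + log (1 + u ^ 2)) ≤ w (H' * u) + log (1 + (H' * u) ^ 2) + H' := by
  have hH'u : u ≤ H' * u := le_mul_of_one_le_left hu (hH.trans hHH')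
  have hHu : H * u ≤ H' * u := by gcongr
  have h1 : w (H * u) ≤ w (H' * u) :=
    hw (hu.trans (le_mul_of_one_le_left hu hH)) (hu.trans hH'u) hHu
  have h2 : w u ≤ w (H' * u) := hw hu (hu.trans hH'u) hH'u
  have h3 := monotoneOn_log_one_add_sq hu (hu.trans hH'u) hH'u
  linarith [hvw u hu, hlog u hu]

theorem stmt_18_general (ω : ℝ → ℝ)
    (hnonneg : ∀ t, 0 ≤ t → 0 ≤ ω t)
    (hlog : Real.log =o[atTop] ω)
    (hnqa : IntegrableOn (fun t => ω t / (1 + t ^ 2)) (Ici 0))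
    (φ : ℝ → ℝ)
    (hφ : ∀ s, 0 ≤ s → φ s = ⨆ y : Ici (0 : ℝ), (s * (y : ℝ) - ω (Real.exp y)))
    (M : ℝ → ℕ → ℝ)
    (hM : ∀ α, 0 < α → ∀ k, M α k = Real.exp ((1 / α) * φ (α * k)))
    (ωM : ℝ → ℝ → ℝ)
    (hωM0 : ∀ α, 0 < α → ωM α 0 = 0)
    (hωM : ∀ α, 0 < α → ∀ t, 0 < t → ωM α t = ⨆ k : ℕ, Real.log (t ^ k / M α k))
    (hRmg : ∀ α, 0 < α → ∃ β, 0 < β ∧ ∃ H : ℝ, 1 ≤ H ∧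
      ∀ t, 0 ≤ t → 2 * ωM β t ≤ ωM α (H * t) + H)
    (κ : ℝ → ℝ → ℝ)
    (hκ : ∀ α, 0 < α → ∀ t, 0 ≤ t →
      κ α t = ∫ s in Ioi (1 : ℝ), (ωM α (t * s) + Real.log (1 + (t * s) ^ 2)) / s ^ 2) :
    ∀ α, 0 < α → ∃ β, 0 < β ∧ ∃ H : ℝ, 1 ≤ H ∧
      ∀ t, 0 ≤ t → 2 * κ β t ≤ κ α (H * t) + H := by
  have hMpos : ∀ γ, 0 < γ → ∀ k, 0 < M γ k := fun γ hγ k => by rw [hM γ hγ]; exact exp_pos _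
  have hM1 : ∀ γ, 0 < γ → M γ 0 ≤ 1 := fun γ hγ => by
    rw [hM γ hγ, exp_le_one_iff, Nat.cast_zero, mul_zero]
    exact mul_nonpos_of_nonneg_of_nonpos (by positivity) (nonpos_of_eq_iSup hnonneg hφ)
  have hB : ∀ γ, 0 < γ → ∀ t, 0 < t → ∀ k, log (t ^ k / M γ k) ≤ γ⁻¹ * ω t + γ⁻¹ * ω 1 :=
    fun γ hγ t ht k => by rw [hM γ hγ]; exact log_pow_div_exp_le hnonneg hlog hφ hγ ht k
  have hmono : ∀ γ, 0 < γ → MonotoneOn (ωM γ) (Ici 0) := fun γ hγ =>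
    monotoneOn_of_eq_iSup_log (hωM0 γ hγ) (hωM γ hγ) (hB γ hγ) (hMpos γ hγ) (hM1 γ hγ)
  have hint : ∀ γ, 0 < γ → ∀ t, 0 ≤ t →
      IntegrableOn (fun s => (ωM γ (t * s) + log (1 + (t * s) ^ 2)) / s ^ 2) (Ioi 1) :=
    fun γ hγ t ht => integrableOn_add_log_div_sq_of_eq_iSup_log hnonneg hnqa (hωM0 γ hγ)
      (hωM γ hγ) (hB γ hγ) (hMpos γ hγ) (hM1 γ hγ) (inv_nonneg.2 hγ.le) ht
  intro α hα
  obtain ⟨C, hC⟩ := exists_log_one_add_sq_le_of_eq_iSup_log (hωM0 α hα) (hωM α hα) (hB α hα)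
    (hMpos α hα) (hM1 α hα)
  obtain ⟨β, hβ, H, hH, h4⟩ := RModerateGrowth.four_mul_le hRmg hα
  refine ⟨β, hβ, max H (3 * H / 2 + C), hH.trans (le_max_left _ _), fun t ht => ?_⟩
  have hH't : 0 ≤ max H (3 * H / 2 + C) * t := by positivity
  rw [hκ β hβ t ht, hκ α hα _ hH't]
  exact mul_setIntegral_div_sq_le (f := fun u => ωM β u + log (1 + u ^ 2))
    (g := fun u => ωM α u + log (1 + u ^ 2)) (hint β hβ t ht) (hint α hα _ hH't)
    (fun u hu => two_mul_add_log_le (hmono α hα) hC h4 hH (le_max_left _ _) (le_max_right _ _)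
      hu) ht

theorem stmt_18 (ω : ℝ → ℝ)
    (hcont : ContinuousOn ω (Ici 0))
    (hmono : MonotoneOn ω (Ici 0))
    (hzero : ω 0 = 0) (hnonneg : ∀ t, 0 ≤ t → 0 ≤ ω t)
    (htop : Tendsto ω atTop atTop)
    (hlog : Real.log =o[atTop] ω)
    (hconv : ConvexOn ℝ univ (fun t => ω (Real.exp t)))
    (hdouble : ∃ C : ℝ, 0 < C ∧ ∀ t, 0 ≤ t → ω (2 * t) ≤ C * ω t + C)
    (hnqa : IntegrableOn (fun t => ω t / (1 + t ^ 2)) (Ici 0))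
    (φ : ℝ → ℝ)
    (hφ : ∀ s, 0 ≤ s → φ s = ⨆ y : Ici (0 : ℝ), (s * (y : ℝ) - ω (Real.exp y)))
    (M : ℝ → ℕ → ℝ)
    (hM : ∀ α, 0 < α → ∀ k, M α k = Real.exp ((1 / α) * φ (α * k)))
    (ωM : ℝ → ℝ → ℝ)
    (hωM0 : ∀ α, 0 < α → ωM α 0 = 0)
    (hωM : ∀ α, 0 < α → ∀ t, 0 < t → ωM α t = ⨆ k : ℕ, Real.log (t ^ k / M α k))
    (hRmg : ∀ α, 0 < α → ∃ β, 0 < β ∧ ∃ H : ℝ, 1 ≤ H ∧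
      ∀ t, 0 ≤ t → 2 * ωM β t ≤ ωM α (H * t) + H)
    (κ : ℝ → ℝ → ℝ)
    (hκ : ∀ α, 0 < α → ∀ t, 0 ≤ t →
      κ α t = ∫ s in Ioi (1 : ℝ), (ωM α (t * s) + Real.log (1 + (t * s) ^ 2)) / s ^ 2) :
    ∀ α, 0 < α → ∃ β, 0 < β ∧ ∃ H : ℝ, 1 ≤ H ∧
      ∀ t, 0 ≤ t → 2 * κ β t ≤ κ α (H * t) + H :=
  stmt_18_general ω hnonneg hlog hnqa φ hφ M hM ωM hωM0 hωM hRmg κ hκ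
end
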